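/- arXiv:1504.06340 — 11 statements merged into one kernel-verified Lean document; each statement's English description precedes it below -/
import Mathlib

section
/- Let N ≥ 1, let L_1, …, L_N > 0, and let f_1, …, f_N : ℝ → ℝ be differentiable with each derivative f_i' Lipschitz continuous with constant L_i; set f(x) = Σ_{i=1}^N f_i(x_i). Let 𝒩 ⊆ {1,…,N} be nonempty, let x ∈ ℝ^N, and define d ∈ ℝ^N by d_i = (1/L_i) · (Σ_{j∈𝒩} (1/L_j)(f_j'(x_j) − f_i'(x_i))) / (Σ_{j∈𝒩} 1/L_j) for i ∈ 𝒩 and d_i = 0 for i ∉ 𝒩. Then f(x + d) ≤ f(x) − (1/2) ∇f(x)ᵀ G_𝒩 ∇f(x), where ∇f(x) = (f_1'(x_1), …, f_N'(x_N)). -/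
/-!
Each `f i` satisfies the one-dimensional descent lemma
`f (x + d) ≤ f x + f' x * d + L / 2 * d ^ 2`, so `f (x + d)` is bounded by `f x` plus the
separable quadratic model `∑ i, (g i * d i + L i / 2 * d i ^ 2)` with `g = ∇f(x)`.
The prescribed step is the minimiser of this model on the hyperplane `∑ i ∈ 𝒩, d i = 0`
(with `d i = 0` off `𝒩`), and a direct computation shows that the minimum value is
`-(1/2) gᵀ G_𝒩 g`.
-/

/-- The matrix `G_𝒩` with entries
`(G_𝒩)_{ij} = (1/L_i)·δ_{ij} − (1/(L_i L_j))/(∑_{k∈𝒩} 1/L_k)` for `i,j ∈ 𝒩`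
and `0` otherwise. -/
noncomputable def GNmat (N : ℕ) (L : Fin N → ℝ) (𝒩 : Finset (Fin N)) :
    Matrix (Fin N) (Fin N) ℝ :=
  Matrix.of fun i j =>
    if i ∈ 𝒩 ∧ j ∈ 𝒩 then
      (if i = j then 1 / L i else 0) - (1 / (L i * L j)) / (∑ k ∈ 𝒩, 1 / L k)
    else 0

open Finset

theorem le_add_deriv_mul_add_half_mul_sq {f : ℝ → ℝ} {L : ℝ} (hf : Differentiable ℝ f)
    (hlip : ∀ a b, |deriv f a - deriv f b| ≤ L * |a - b|) (x d : ℝ) :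
    f (x + d) ≤ f x + deriv f x * d + L / 2 * d ^ 2 := by
  set φ : ℝ → ℝ := fun t => f (x + t * d) - deriv f x * d * t - L / 2 * d ^ 2 * t ^ 2
  have hφ : ∀ t, HasDerivAt φ ((deriv f (x + t * d) - deriv f x) * d - L * d ^ 2 * t) t := by
    intro t
    have hline : HasDerivAt (fun t : ℝ => x + t * d) d t := by
      simpa using ((hasDerivAt_id t).mul_const d).const_add x
    have := ((((hf _).hasDerivAt.comp t hline).sub
      ((hasDerivAt_id t).const_mul (deriv f x * d))).sub
      ((hasDerivAt_pow 2 t).const_mul (L / 2 * d ^ 2)))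
    exact this.congr_deriv <| by
      simp only [mul_one, Nat.cast_ofNat, Nat.add_one_sub_one, pow_one]; ring
  have hφ_anti : AntitoneOn φ (Set.Icc 0 1) := by
    refine antitoneOn_of_deriv_nonpos (convex_Icc 0 1) (HasDerivAt.continuousOn fun t _ => hφ t)
      (fun t _ => (hφ t).differentiableAt.differentiableWithinAt) ?_
    intro t ht
    rw [interior_Icc] at ht
    have hgap := hlip (x + t * d) x
    rw [add_sub_cancel_left, abs_mul, abs_of_pos ht.1] at hgap
    rw [(hφ t).deriv, sub_nonpos]
    calc (deriv f (x + t * d) - deriv f x) * d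
        ≤ |deriv f (x + t * d) - deriv f x| * |d| := (le_abs_self _).trans (abs_mul _ _).le
      _ ≤ L * (t * |d|) * |d| := by gcongr
      _ = L * d ^ 2 * t := by rw [← sq_abs d]; ring
  have h01 := hφ_anti ⟨le_rfl, zero_le_one⟩ ⟨zero_le_one, le_rfl⟩ zero_le_one
  norm_num [φ] at h01
  linarith

theorem sum_mul_GNmat_mul_eq {N : ℕ} (L : Fin N → ℝ) (𝒩 : Finset (Fin N)) (g : Fin N → ℝ) :
    ∑ i, ∑ j, g i * GNmat N L 𝒩 i j * g j =
      ∑ i ∈ 𝒩, g i ^ 2 / L i - (∑ i ∈ 𝒩, g i / L i) ^ 2 / ∑ i ∈ 𝒩, 1 / L i := by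
  simp only [GNmat, Matrix.of_apply, ite_and, mul_ite, ite_mul, mul_zero, zero_mul, sum_ite_irrel,
    sum_const_zero, ← sum_filter, filter_mem_eq_inter, univ_inter, mul_sub, sub_mul,
    sum_sub_distrib, filter_eq]
  rw [sq, sum_mul_sum, sum_div]
  congr 1 <;> refine sum_congr rfl fun i hi => ?_
  · rw [if_pos hi, sum_singleton]
    ring
  · rw [sum_div]
    exact sum_congr rfl fun j _ => by ring

theorem sum_mul_add_half_mul_sq_eq_neg_half_sum_GNmat {N : ℕ} {L : Fin N → ℝ}
    {𝒩 : Finset (Fin N)} (hL : ∀ i ∈ 𝒩, 0 < L i) (h𝒩 : 𝒩.Nonempty) (g d : Fin N → ℝ)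
    (hd : ∀ i ∈ 𝒩, d i = (1 / L i) *
      ((∑ j ∈ 𝒩, (1 / L j) * (g j - g i)) / (∑ j ∈ 𝒩, 1 / L j)))
    (hd0 : ∀ i ∉ 𝒩, d i = 0) :
    ∑ i, (g i * d i + L i / 2 * d i ^ 2) =
      -(1 / 2) * ∑ i, ∑ j, g i * GNmat N L 𝒩 i j * g j := by
  rw [sum_mul_GNmat_mul_eq]
  set S := ∑ j ∈ 𝒩, 1 / L j
  set A := ∑ j ∈ 𝒩, g j / L j
  have hS : S ≠ 0 := (sum_pos (fun j hj => one_div_pos.2 (hL j hj)) h𝒩).ne'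
  have hd_eq : ∀ i ∈ 𝒩, d i = (A - S * g i) / (L i * S) := by
    intro i hi
    have hnum : ∑ j ∈ 𝒩, (1 / L j) * (g j - g i) = A - S * g i := by
      rw [sum_mul, ← sum_sub_distrib]
      exact sum_congr rfl fun j _ => by ring
    rw [hd i hi, hnum]
    field_simp
  have hterm : ∀ i ∈ 𝒩, g i * d i + L i / 2 * d i ^ 2 =
      A ^ 2 / (2 * S ^ 2) * (1 / L i) - 1 / 2 * (g i ^ 2 / L i) := by
    intro i hi
    have := (hL i hi).ne'
    rw [hd_eq i hi]
    field_simp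
    ring
  rw [← sum_subset (subset_univ 𝒩) fun i _ hi => by simp [hd0 i hi],
    sum_congr rfl hterm, sum_sub_distrib, ← mul_sum, ← mul_sum]
  field_simp
  ring

theorem stmt_3_general (N : ℕ) (L : Fin N → ℝ) (hL : ∀ i, 0 < L i)
    (f : Fin N → ℝ → ℝ) (hdiff : ∀ i, Differentiable ℝ (f i))
    (hlip : ∀ i, ∀ a b : ℝ, |deriv (f i) a - deriv (f i) b| ≤ L i * |a - b|)
    (𝒩 : Finset (Fin N)) (h𝒩 : 𝒩.Nonempty) (x : Fin N → ℝ)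
    (d : Fin N → ℝ)
    (hd : ∀ i ∈ 𝒩, d i = (1 / L i) *
      ((∑ j ∈ 𝒩, (1 / L j) * (deriv (f j) (x j) - deriv (f i) (x i))) /
        (∑ j ∈ 𝒩, 1 / L j)))
    (hd0 : ∀ i ∉ 𝒩, d i = 0) :
    ∑ i, f i (x i + d i) ≤ ∑ i, f i (x i)
      - (1 / 2) * ∑ i, ∑ j,
          deriv (f i) (x i) * GNmat N L 𝒩 i j * deriv (f j) (x j) := by
  calc ∑ i, f i (x i + d i)
      ≤ ∑ i, (f i (x i) + (deriv (f i) (x i) * d i + L i / 2 * d i ^ 2)) :=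
        sum_le_sum fun i _ => by
          linarith [le_add_deriv_mul_add_half_mul_sq (hdiff i) (hlip i) (x i) (d i)]
    _ = _ := by
      rw [sum_add_distrib,
        sum_mul_add_half_mul_sq_eq_neg_half_sum_GNmat (fun i _ => hL i) h𝒩 _ d hd hd0]
      ring

/-- The coordinate descent step along `𝒩` decreases the objective
by at least `(1/2) ∇f(x)ᵀ G_𝒩 ∇f(x)`. -/
theorem stmt_3 (N : ℕ) (hN : 1 ≤ N) (L : Fin N → ℝ) (hL : ∀ i, 0 < L i)
    (f : Fin N → ℝ → ℝ) (hdiff : ∀ i, Differentiable ℝ (f i))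
    (hlip : ∀ i, ∀ a b : ℝ, |deriv (f i) a - deriv (f i) b| ≤ L i * |a - b|)
    (𝒩 : Finset (Fin N)) (h𝒩 : 𝒩.Nonempty) (x : Fin N → ℝ)
    (d : Fin N → ℝ)
    (hd : ∀ i ∈ 𝒩, d i = (1 / L i) *
      ((∑ j ∈ 𝒩, (1 / L j) * (deriv (f j) (x j) - deriv (f i) (x i))) /
        (∑ j ∈ 𝒩, 1 / L j)))
    (hd0 : ∀ i ∉ 𝒩, d i = 0) :
    ∑ i, f i (x i + d i) ≤ ∑ i, f i (x i)
      - (1 / 2) * ∑ i, ∑ j,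
          deriv (f i) (x i) * GNmat N L 𝒩 i j * deriv (f j) (x j) :=
  stmt_3_general N L hL f hdiff hlip 𝒩 h𝒩 x d hd hd0
end

section
/- Let N ≥ 1, L_1, …, L_N > 0, and let f_1, …, f_N : ℝ → ℝ be differentiable with each derivative f_i' Lipschitz continuous with constant L_i; set f(x) = Σ_{i=1}^N f_i(x_i). Let 𝒩_1, …, 𝒩_m be nonempty subsets of {1,…,N} and p_1, …, p_m ≥ 0 with Σ_{j=1}^m p_j = 1. For x ∈ ℝ^N and each j, let x⁺(j) = x + d(j), where d(j)_i = (1/L_i) · (Σ_{l∈𝒩_j} (1/L_l)(f_l'(x_l) − f_i'(x_i))) / (Σ_{l∈𝒩_j} 1/L_l) for i ∈ 𝒩_j and d(j)_i = 0 otherwise. Then Σ_{j=1}^m p_j f(x⁺(j)) ≤ f(x) − (1/2) ∇f(x)ᵀ G ∇f(x), where G = Σ_{j=1}^m p_j G_{𝒩_j} and ∇f(x) = (f_1'(x_1), …, f_N'(x_N)). -/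
/-!
Each `f_i'` being `L_i`-Lipschitz gives the one-dimensional descent bound
`f_i(x_i + h) ≤ f_i(x_i) + f_i'(x_i) h + (L_i/2) h²`. On a block `𝒩` the step is
`d_i = (μ - g_i)/L_i`, with `μ` the `1/L`-weighted mean of the gradient entries `g_i` over `𝒩`,
and it makes the quadratic model `∑_i (g_i d_i + (L_i/2) d_i²) = ∑_{i∈𝒩} (μ² - g_i²)/(2 L_i)`
equal to `-(1/2) gᵀ G_𝒩 g`. Averaging over the blocks with the weights `p_j` gives the claim,
since `G` is linear in the `G_{𝒩_j}`.
-/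

open Finset Set

theorem le_add_deriv_mul_add_sq_of_abs_deriv_sub_le {f : ℝ → ℝ} {L : ℝ}
    (hf : Differentiable ℝ f) (hf' : ∀ a b, |deriv f a - deriv f b| ≤ L * |a - b|)
    (a h : ℝ) : f (a + h) ≤ f a + deriv f a * h + L / 2 * h ^ 2 := by
  set φ : ℝ → ℝ := fun t => f (a + t * h) - deriv f a * (t * h) - L / 2 * (t * h) ^ 2
  have hφ : ∀ t, HasDerivAt φ ((deriv f (a + t * h) - deriv f a) * h - L * t * h ^ 2) t := by
    intro t
    have hline : HasDerivAt (fun t : ℝ => t * h) h t := by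
      simpa using (hasDerivAt_id t).mul_const h
    have := (((hf _).hasDerivAt.comp t (hline.const_add a)).sub
      (hline.const_mul (deriv f a))).sub ((hline.pow 2).const_mul (L / 2))
    exact this.congr_deriv (by push_cast; ring)
  have hanti : AntitoneOn φ (Ici 0) := by
    refine antitoneOn_of_hasDerivWithinAt_nonpos (convex_Ici 0)
      (fun t _ => (hφ t).continuousAt.continuousWithinAt)
      (fun t _ => (hφ t).hasDerivWithinAt) fun t ht => ?_
    rw [interior_Ici] at ht
    calc (deriv f (a + t * h) - deriv f a) * h - L * t * h ^ 2
        ≤ |deriv f (a + t * h) - deriv f a| * |h| - L * t * h ^ 2 := by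
          rw [← abs_mul]; gcongr; exact le_abs_self _
      _ ≤ L * |a + t * h - a| * |h| - L * t * h ^ 2 := by gcongr; exact hf' _ _
      _ = 0 := by
          rw [add_sub_cancel_left, abs_mul, abs_of_pos ht, mul_assoc, mul_assoc,
            abs_mul_abs_self]
          ring
  have hφ10 := hanti self_mem_Ici (mem_Ici.2 zero_le_one) zero_le_one
  norm_num [φ] at hφ10
  linarith

theorem sum_mul_add_half_mul_sq_of_eq_weighted_mean_sub {ι : Type*} {𝒩 : Finset ι}
    {L g d : ι → ℝ} (h𝒩 : 𝒩.Nonempty) (hL : ∀ i ∈ 𝒩, 0 < L i)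
    (hd : ∀ i ∈ 𝒩, d i = (1 / L i) *
      ((∑ l ∈ 𝒩, (1 / L l) * (g l - g i)) / ∑ l ∈ 𝒩, 1 / L l)) :
    ∑ i ∈ 𝒩, (g i * d i + L i / 2 * d i ^ 2) =
      -(1 / 2) * (∑ i ∈ 𝒩, g i ^ 2 / L i - (∑ i ∈ 𝒩, g i / L i) ^ 2 / ∑ i ∈ 𝒩, 1 / L i) := by
  set S := ∑ i ∈ 𝒩, 1 / L i
  set T := ∑ i ∈ 𝒩, g i / L i
  have hS : 0 < S := sum_pos (fun i hi => one_div_pos.2 (hL i hi)) h𝒩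
  have hterm : ∀ i ∈ 𝒩,
      g i * d i + L i / 2 * d i ^ 2 = (T / S) ^ 2 / 2 * (1 / L i) - 1 / 2 * (g i ^ 2 / L i) := by
    intro i hi
    have hsum : ∑ l ∈ 𝒩, (1 / L l) * (g l - g i) = T - S * g i := by
      simp only [T, S, mul_sub, sum_sub_distrib, sum_mul]
      congr 1
      exact sum_congr rfl fun l _ => by ring
    rw [hd i hi, hsum]
    have := (hL i hi).ne'
    field_simp
    ring
  rw [sum_congr rfl hterm, sum_sub_distrib, ← mul_sum, ← mul_sum]
  field_simp
  ring

theorem sum_sum_mul_sum_smul_mul {ι n R : Type*} [Fintype ι] [Fintype n] [CommSemiring R]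
    (p : ι → R) (A : ι → Matrix n n R) (g : n → R) :
    ∑ i, ∑ i', g i * (∑ j, p j • A j) i i' * g i' =
      ∑ j, p j * ∑ i, ∑ i', g i * A j i i' * g i' :=
  calc ∑ i, ∑ i', g i * (∑ j, p j • A j) i i' * g i'
      = ∑ i, ∑ i', ∑ j, p j * (g i * A j i i' * g i') := by
        simp only [Matrix.sum_apply, Matrix.smul_apply, smul_eq_mul, mul_sum, sum_mul]
        exact sum_congr rfl fun _ _ => sum_congr rfl fun _ _ => sum_congr rfl fun _ _ => by ring
    _ = ∑ i, ∑ j, ∑ i', p j * (g i * A j i i' * g i') := sum_congr rfl fun _ _ => sum_comm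
    _ = ∑ j, p j * ∑ i, ∑ i', g i * A j i i' * g i' := by simp only [mul_sum]; exact sum_comm

theorem sum_sum_mul_GNmat_mul (N : ℕ) (L : Fin N → ℝ) (𝒩 : Finset (Fin N)) (g : Fin N → ℝ) :
    ∑ i, ∑ i', g i * GNmat N L 𝒩 i i' * g i' =
      ∑ i ∈ 𝒩, g i ^ 2 / L i - (∑ i ∈ 𝒩, g i / L i) ^ 2 / ∑ i ∈ 𝒩, 1 / L i := by
  simp only [GNmat, Matrix.of_apply, ite_and, mul_ite, ite_mul, mul_zero, zero_mul,
    sum_ite_irrel, sum_const_zero, Finset.univ_inter, mul_sub, sub_mul, sum_sub_distrib,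
    sum_ite_eq, sum_ite_mem, Finset.inter_self, sq, sum_mul_sum, sum_div]
  congr 1
  · exact sum_congr rfl fun i _ => by ring
  · exact sum_congr rfl fun i _ => sum_congr rfl fun j _ => by ring

theorem sum_apply_add_le_sub_half_sum_sum_mul_GNmat_mul (N : ℕ) (L : Fin N → ℝ)
    (hL : ∀ i, 0 < L i) (f : Fin N → ℝ → ℝ) (hdiff : ∀ i, Differentiable ℝ (f i))
    (hlip : ∀ i, ∀ a b : ℝ, |deriv (f i) a - deriv (f i) b| ≤ L i * |a - b|)
    {𝒩 : Finset (Fin N)} (h𝒩 : 𝒩.Nonempty) (x d : Fin N → ℝ)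
    (hd : ∀ i ∈ 𝒩, d i = (1 / L i) *
      ((∑ l ∈ 𝒩, (1 / L l) * (deriv (f l) (x l) - deriv (f i) (x i))) / ∑ l ∈ 𝒩, 1 / L l))
    (hd0 : ∀ i ∉ 𝒩, d i = 0) :
    ∑ i, f i (x i + d i) ≤ ∑ i, f i (x i) -
      1 / 2 * ∑ i, ∑ i', deriv (f i) (x i) * GNmat N L 𝒩 i i' * deriv (f i') (x i') := by
  set g : Fin N → ℝ := fun i => deriv (f i) (x i)
  calc ∑ i, f i (x i + d i) ≤ ∑ i, (f i (x i) + (g i * d i + L i / 2 * d i ^ 2)) :=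
        sum_le_sum fun i _ => by
          linarith [le_add_deriv_mul_add_sq_of_abs_deriv_sub_le (hdiff i) (hlip i) (x i) (d i)]
    _ = ∑ i, f i (x i) + ∑ i ∈ 𝒩, (g i * d i + L i / 2 * d i ^ 2) := by
        rw [sum_add_distrib, sum_subset (subset_univ 𝒩) fun i _ hi => by simp [hd0 i hi]]
    _ = ∑ i, f i (x i) - 1 / 2 * ∑ i, ∑ i', g i * GNmat N L 𝒩 i i' * g i' := by
        rw [sum_mul_add_half_mul_sq_of_eq_weighted_mean_sub h𝒩 (fun i _ => hL i) hd,
          sum_sum_mul_GNmat_mul]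
        ring

theorem stmt_5_general (N : ℕ) (L : Fin N → ℝ) (hL : ∀ i, 0 < L i)
    (f : Fin N → ℝ → ℝ) (hdiff : ∀ i, Differentiable ℝ (f i))
    (hlip : ∀ i, ∀ a b : ℝ, |deriv (f i) a - deriv (f i) b| ≤ L i * |a - b|)
    (m : ℕ) (𝒩s : Fin m → Finset (Fin N)) (h𝒩s : ∀ j, (𝒩s j).Nonempty)
    (p : Fin m → ℝ) (hp : ∀ j, 0 ≤ p j) (hp1 : ∑ j, p j = 1)
    (x : Fin N → ℝ) (d : Fin m → Fin N → ℝ)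
    (hd : ∀ j, ∀ i ∈ 𝒩s j, d j i = (1 / L i) *
      ((∑ l ∈ 𝒩s j, (1 / L l) * (deriv (f l) (x l) - deriv (f i) (x i))) /
        (∑ l ∈ 𝒩s j, 1 / L l)))
    (hd0 : ∀ j, ∀ i ∉ 𝒩s j, d j i = 0) :
    ∑ j, p j * (∑ i, f i (x i + d j i)) ≤ (∑ i, f i (x i))
      - (1 / 2) * ∑ i, ∑ i', deriv (f i) (x i) *
          (∑ j, p j • GNmat N L (𝒩s j)) i i' * deriv (f i') (x i') := by
  set g : Fin N → ℝ := fun i => deriv (f i) (x i)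
  set Q : Fin m → ℝ := fun j => ∑ i, ∑ i', g i * GNmat N L (𝒩s j) i i' * g i'
  calc ∑ j, p j * (∑ i, f i (x i + d j i)) ≤ ∑ j, p j * (∑ i, f i (x i) - 1 / 2 * Q j) :=
        sum_le_sum fun j _ => mul_le_mul_of_nonneg_left
          (sum_apply_add_le_sub_half_sum_sum_mul_GNmat_mul N L hL f hdiff hlip (h𝒩s j) x (d j)
            (hd j) (hd0 j)) (hp j)
    _ = ∑ i, f i (x i) - 1 / 2 * ∑ j, p j * Q j := by
        simp only [mul_sub, sum_sub_distrib, mul_left_comm (p _) (1 / 2)]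
        rw [← sum_mul, hp1, one_mul, ← mul_sum]
    _ = _ := by rw [sum_sum_mul_sum_smul_mul]

/-- Expected decrease of the randomized coordinate descent step:
`∑ j, p j • f (x⁺(j)) ≤ f(x) − (1/2) ∇f(x)ᵀ G ∇f(x)` where
`G = ∑ j, p j • G_{𝒩 j}`. -/
theorem stmt_5 (N : ℕ) (hN : 1 ≤ N) (L : Fin N → ℝ) (hL : ∀ i, 0 < L i)
    (f : Fin N → ℝ → ℝ) (hdiff : ∀ i, Differentiable ℝ (f i))
    (hlip : ∀ i, ∀ a b : ℝ, |deriv (f i) a - deriv (f i) b| ≤ L i * |a - b|)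
    (m : ℕ) (𝒩s : Fin m → Finset (Fin N)) (h𝒩s : ∀ j, (𝒩s j).Nonempty)
    (p : Fin m → ℝ) (hp : ∀ j, 0 ≤ p j) (hp1 : ∑ j, p j = 1)
    (x : Fin N → ℝ) (d : Fin m → Fin N → ℝ)
    (hd : ∀ j, ∀ i ∈ 𝒩s j, d j i = (1 / L i) *
      ((∑ l ∈ 𝒩s j, (1 / L l) * (deriv (f l) (x l) - deriv (f i) (x i))) /
        (∑ l ∈ 𝒩s j, 1 / L l)))
    (hd0 : ∀ j, ∀ i ∉ 𝒩s j, d j i = 0) :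
    ∑ j, p j * (∑ i, f i (x i + d j i)) ≤ (∑ i, f i (x i))
      - (1 / 2) * ∑ i, ∑ i', deriv (f i) (x i) *
          (∑ j, p j • GNmat N L (𝒩s j)) i i' * deriv (f i') (x i') :=
  stmt_5_general N L hL f hdiff hlip m 𝒩s h𝒩s p hp hp1 x d hd hd0
end

section
/- Let N ≥ 2, L_1, …, L_N > 0, let 𝒩_1, …, 𝒩_m be subsets of {1,…,N} each with at least two elements, let p_1, …, p_m > 0, and set G = Σ_{j=1}^m p_j G_{𝒩_j}. Suppose the graph on vertex set {1,…,N} in which distinct vertices i and l are adjacent whenever {i,l} ⊆ 𝒩_j for some j is connected. Then for every x ∈ ℝ^N, xᵀ G x = 0 if and only if x_1 = x_2 = ⋯ = x_N; in particular the kernel of G equals the span of the all-ones vector e. -/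
open Matrix Finset

theorem SimpleGraph.Reachable.eq_of_forall_adj {V β : Type*} {G : SimpleGraph V} {u v : V}
    {f : V → β} (h : ∀ a b, G.Adj a b → f a = f b) (huv : G.Reachable u v) : f u = f v := by
  obtain ⟨w⟩ := huv
  induction w with
  | nil => rfl
  | cons hadj _ ih => exact (h _ _ hadj).trans ih

section GNmat

variable {N : ℕ} (L : Fin N → ℝ) (𝒩 : Finset (Fin N))

noncomputable def weightedMean (x : Fin N → ℝ) : ℝ :=
  (∑ k ∈ 𝒩, x k / L k) / ∑ k ∈ 𝒩, 1 / L k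

theorem GNmat_mulVec_apply (x : Fin N → ℝ) (i : Fin N) :
    (GNmat N L 𝒩 *ᵥ x) i = if i ∈ 𝒩 then (x i - weightedMean L 𝒩 x) / L i else 0 := by
  split_ifs with hi
  · have hrow : ∀ j, GNmat N L 𝒩 i j * x j =
        if j ∈ 𝒩 then (if i = j then x i / L i else 0) -
          x j / L j / (L i * ∑ k ∈ 𝒩, 1 / L k) else 0 := by
      intro j
      by_cases hj : j ∈ 𝒩
      · simp only [GNmat, of_apply, hi, hj, and_self, if_true]
        split_ifs with hij
        · subst hij; ring
        · ring
      · simp only [GNmat, of_apply, hj, and_false, if_false, zero_mul]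
    simp only [mulVec, dotProduct, hrow, sum_ite_mem, univ_inter, sum_sub_distrib, sum_ite_eq, hi,
      if_true, ← sum_div, weightedMean]
    field_simp
  · simp [mulVec, dotProduct, GNmat, hi]

variable {L 𝒩}

theorem sum_one_div_pos (hL : ∀ i ∈ 𝒩, 0 < L i) (h𝒩 : 𝒩.Nonempty) : 0 < ∑ k ∈ 𝒩, 1 / L k :=
  sum_pos (fun k hk => one_div_pos.mpr (hL k hk)) h𝒩

theorem weightedMean_const (hL : ∀ i ∈ 𝒩, 0 < L i) (h𝒩 : 𝒩.Nonempty) (c : ℝ) :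
    weightedMean L 𝒩 (fun _ => c) = c := by
  have hS := (sum_one_div_pos hL h𝒩).ne'
  simp only [weightedMean, div_eq_mul_one_div c, ← mul_sum]
  field_simp

theorem sum_sub_weightedMean_div (hL : ∀ i ∈ 𝒩, 0 < L i) (x : Fin N → ℝ) :
    ∑ i ∈ 𝒩, (x i - weightedMean L 𝒩 x) / L i = 0 := by
  rcases 𝒩.eq_empty_or_nonempty with rfl | h𝒩
  · rfl
  have hsplit : ∑ i ∈ 𝒩, (x i - weightedMean L 𝒩 x) / L i =
      ∑ i ∈ 𝒩, x i / L i - weightedMean L 𝒩 x * ∑ i ∈ 𝒩, 1 / L i := by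
    rw [mul_sum, ← sum_sub_distrib]
    exact sum_congr rfl fun i _ => by ring
  rw [hsplit, weightedMean, div_mul_cancel₀ _ (sum_one_div_pos hL h𝒩).ne', sub_self]

theorem GNmat_mulVec_const (hL : ∀ i ∈ 𝒩, 0 < L i) (c : ℝ) :
    GNmat N L 𝒩 *ᵥ (fun _ => c) = 0 := by
  ext i
  rw [GNmat_mulVec_apply]
  split_ifs with hi
  · rw [weightedMean_const hL ⟨i, hi⟩, sub_self, zero_div, Pi.zero_apply]
  · rfl

theorem dotProduct_GNmat_mulVec (hL : ∀ i ∈ 𝒩, 0 < L i) (x : Fin N → ℝ) :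
    x ⬝ᵥ (GNmat N L 𝒩 *ᵥ x) = ∑ i ∈ 𝒩, (x i - weightedMean L 𝒩 x) ^ 2 / L i := by
  set μ := weightedMean L 𝒩 x
  have hμ : ∑ i ∈ 𝒩, μ * ((x i - μ) / L i) = 0 := by
    rw [← mul_sum, sum_sub_weightedMean_div hL, mul_zero]
  simp only [dotProduct, GNmat_mulVec_apply, mul_ite, mul_zero, sum_ite_mem, univ_inter]
  rw [← sub_zero (∑ i ∈ 𝒩, _), ← hμ, ← sum_sub_distrib]
  exact sum_congr rfl fun i _ => by ring

theorem dotProduct_GNmat_mulVec_nonneg (hL : ∀ i ∈ 𝒩, 0 < L i) (x : Fin N → ℝ) :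
    0 ≤ x ⬝ᵥ (GNmat N L 𝒩 *ᵥ x) := by
  rw [dotProduct_GNmat_mulVec hL]
  exact sum_nonneg fun i hi => div_nonneg (sq_nonneg _) (hL i hi).le

theorem eq_of_dotProduct_GNmat_mulVec_eq_zero (hL : ∀ i ∈ 𝒩, 0 < L i) {x : Fin N → ℝ}
    (hx : x ⬝ᵥ (GNmat N L 𝒩 *ᵥ x) = 0) {i j : Fin N} (hi : i ∈ 𝒩) (hj : j ∈ 𝒩) : x i = x j := by
  rw [dotProduct_GNmat_mulVec hL, sum_eq_zero_iff_of_nonneg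
    fun k hk => div_nonneg (sq_nonneg _) (hL k hk).le] at hx
  have hmean : ∀ k ∈ 𝒩, x k = weightedMean L 𝒩 x := fun k hk => by
    simpa [sub_eq_zero, (hL k hk).ne'] using hx k hk
  rw [hmean i hi, hmean j hj]

end GNmat

theorem dotProduct_sum_smul_mulVec {ι n R : Type*} [Fintype n] [CommSemiring R] (s : Finset ι)
    (p : ι → R) (A : ι → Matrix n n R) (x : n → R) :
    x ⬝ᵥ ((∑ j ∈ s, p j • A j) *ᵥ x) = ∑ j ∈ s, p j * (x ⬝ᵥ (A j *ᵥ x)) := by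
  simp only [sum_mulVec, smul_mulVec, dotProduct_sum, dotProduct_smul, smul_eq_mul]

theorem eq_of_dotProduct_sum_smul_GNmat_mulVec_eq_zero {N m : ℕ} {L : Fin N → ℝ}
    (hL : ∀ i, 0 < L i) {𝒩s : Fin m → Finset (Fin N)} {p : Fin m → ℝ} (hp : ∀ j, 0 < p j)
    (hconn : (SimpleGraph.fromRel fun i l : Fin N => ∃ j, i ∈ 𝒩s j ∧ l ∈ 𝒩s j).Connected)
    {x : Fin N → ℝ} (hx : x ⬝ᵥ ((∑ j, p j • GNmat N L (𝒩s j)) *ᵥ x) = 0) (i l : Fin N) :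
    x i = x l := by
  rw [dotProduct_sum_smul_mulVec, sum_eq_zero_iff_of_nonneg fun j _ =>
    mul_nonneg (hp j).le (dotProduct_GNmat_mulVec_nonneg (fun i _ => hL i) x)] at hx
  have hform : ∀ j, x ⬝ᵥ (GNmat N L (𝒩s j) *ᵥ x) = 0 := fun j =>
    (mul_eq_zero.mp (hx j (mem_univ j))).resolve_left (hp j).ne'
  refine (hconn.preconnected i l).eq_of_forall_adj fun a b hab => ?_
  obtain ⟨j, ha, hb⟩ : ∃ j, a ∈ 𝒩s j ∧ b ∈ 𝒩s j := by
    rcases (SimpleGraph.fromRel_adj _ a b).mp hab with ⟨-, h | ⟨j, hb, ha⟩⟩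
    exacts [h, ⟨j, ha, hb⟩]
  exact eq_of_dotProduct_GNmat_mulVec_eq_zero (fun i _ => hL i) (hform j) ha hb

theorem stmt_6_general (N : ℕ) (L : Fin N → ℝ) (hL : ∀ i, 0 < L i)
    (m : ℕ) (𝒩s : Fin m → Finset (Fin N))
    (p : Fin m → ℝ) (hp : ∀ j, 0 < p j)
    (G : Matrix (Fin N) (Fin N) ℝ) (hG : G = ∑ j, p j • GNmat N L (𝒩s j))
    (hconn : (SimpleGraph.fromRel
      (fun i l : Fin N => ∃ j, i ∈ 𝒩s j ∧ l ∈ 𝒩s j)).Connected) :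
    (∀ x : Fin N → ℝ,
      (∑ i, ∑ j, x i * G i j * x j) = 0 ↔ ∀ i j : Fin N, x i = x j) ∧
    (∀ x : Fin N → ℝ,
      G.mulVec x = 0 ↔ ∃ c : ℝ, x = fun _ => c) := by
  have hform : ∀ x, ∑ i, ∑ j, x i * G i j * x j = x ⬝ᵥ (G *ᵥ x) := fun x => by
    simp only [dotProduct, mulVec, mul_sum, mul_assoc]
  have hconst : ∀ c : ℝ, G *ᵥ (fun _ => c) = 0 := fun c => by
    simp only [hG, sum_mulVec, smul_mulVec, GNmat_mulVec_const (fun i _ => hL i), smul_zero,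
      sum_const_zero]
  have hzero : ∀ x, x ⬝ᵥ (G *ᵥ x) = 0 → ∀ i l, x i = x l := fun x hx =>
    eq_of_dotProduct_sum_smul_GNmat_mulVec_eq_zero hL hp hconn (hG ▸ hx)
  have hconst_iff : ∀ x : Fin N → ℝ, (∀ i l, x i = x l) ↔ ∃ c, x = fun _ => c := fun x =>
    ⟨fun h => ⟨x hconn.nonempty.some, funext fun i => h i _⟩, by rintro ⟨c, rfl⟩ _ _; rfl⟩
  refine ⟨fun x => ⟨fun h => hzero x (hform x ▸ h), fun h => ?_⟩,
    fun x => ⟨fun h => (hconst_iff x).mp (hzero x (by rw [h, dotProduct_zero])), ?_⟩⟩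
  · obtain ⟨c, rfl⟩ := (hconst_iff x).mp h
    rw [hform, hconst, dotProduct_zero]
  · rintro ⟨c, rfl⟩
    exact hconst c

/-- If the graph generated by the sets `𝒩 j` is connected, then
`xᵀ G x = 0` iff all components of `x` are equal, and the kernel of
`G = ∑ j, p j • G_{𝒩 j}` is the span of the all-ones vector. -/
theorem stmt_6 (N : ℕ) (hN : 2 ≤ N) (L : Fin N → ℝ) (hL : ∀ i, 0 < L i)
    (m : ℕ) (𝒩s : Fin m → Finset (Fin N)) (hcard : ∀ j, 2 ≤ (𝒩s j).card)
    (p : Fin m → ℝ) (hp : ∀ j, 0 < p j)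
    (G : Matrix (Fin N) (Fin N) ℝ) (hG : G = ∑ j, p j • GNmat N L (𝒩s j))
    (hconn : (SimpleGraph.fromRel
      (fun i l : Fin N => ∃ j, i ∈ 𝒩s j ∧ l ∈ 𝒩s j)).Connected) :
    (∀ x : Fin N → ℝ,
      (∑ i, ∑ j, x i * G i j * x j) = 0 ↔ ∀ i j : Fin N, x i = x j) ∧
    (∀ x : Fin N → ℝ,
      G.mulVec x = 0 ↔ ∃ c : ℝ, x = fun _ => c) :=
  stmt_6_general N L hL m 𝒩s p hp G hG hconn
end

section
/- Let N ≥ 2 and let G be an N×N symmetric positive semidefinite real matrix with G e = 0 whose kernel equals the span of the all-ones vector e. Then for every ζ > 0 the matrix G + ζ e eᵀ is positive definite (hence invertible), and for every x ∈ S, sup{⟨x,u⟩ : u ∈ ℝ^N, uᵀGu ≤ 1} = √(xᵀ (G + ζ e eᵀ)^{-1} x); in particular the right-hand side is independent of ζ > 0. -/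
/-!
Every `x` with coordinate sum zero is of the form `G v`: adding `ζ e eᵀ` makes `G` definite,
and if `(G + ζ e eᵀ) v = x` then summing coordinates (using `eᵀ G = 0`) gives `∑ v = 0`, so
`G v = x`. The dual norm of `G v` is `√(vᵀ G v)`: it is an upper bound by Cauchy–Schwarz for the
semi-inner product `uᵀ G w`, and it is attained at `u = v / √(vᵀ G v)`.
-/

open Matrix

section

variable {n : Type*} [Fintype n]

theorem Matrix.PosSemidef.dotProduct_mulVec_sq_le {G : Matrix n n ℝ} (hG : G.PosSemidef)
    (u v : n → ℝ) : (u ⬝ᵥ G *ᵥ v) ^ 2 ≤ (u ⬝ᵥ G *ᵥ u) * (v ⬝ᵥ G *ᵥ v) := by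
  classical
  have hsymm : G.toBilin'.IsSymm :=
    isSymm_toBilin'_iff_isSymm.mpr (isHermitian_iff_isSymm.mp hG.isHermitian)
  have hnonneg (w : n → ℝ) : 0 ≤ G.toBilin' w w := by
    simpa [toBilin'_apply'] using hG.dotProduct_mulVec_nonneg w
  simpa only [toBilin'_apply'] using
    G.toBilin'.apply_sq_le_of_symm hnonneg (LinearMap.BilinForm.isSymm_iff.mp hsymm) u v

theorem Matrix.PosSemidef.isGreatest_dotProduct_mulVec {G : Matrix n n ℝ} (hG : G.PosSemidef)
    (v : n → ℝ) :
    IsGreatest {r : ℝ | ∃ u, u ⬝ᵥ G *ᵥ u ≤ 1 ∧ r = G *ᵥ v ⬝ᵥ u} √(v ⬝ᵥ G *ᵥ v) := by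
  set Q := v ⬝ᵥ G *ᵥ v
  have hQ : 0 ≤ Q := by simpa using hG.dotProduct_mulVec_nonneg v
  constructor
  · -- for `Q = 0` this witness is `0`, as `(√0)⁻¹ = 0`
    refine ⟨(√Q)⁻¹ • v, ?_, ?_⟩
    · simp only [mulVec_smul, dotProduct_smul, smul_dotProduct, smul_eq_mul]
      rw [← mul_assoc, ← mul_inv, Real.mul_self_sqrt hQ]
      exact inv_mul_le_one_of_le₀ le_rfl hQ
    · rw [dotProduct_smul, dotProduct_comm, smul_eq_mul, inv_mul_eq_div, Real.div_sqrt]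
  · rintro r ⟨u, hu, rfl⟩
    rw [dotProduct_comm]
    exact Real.le_sqrt_of_sq_le
      ((hG.dotProduct_mulVec_sq_le u v).trans (mul_le_of_le_one_left hQ hu))

theorem Matrix.allOnes_mulVec {R : Type*} [NonAssocSemiring R] (u : n → R) :
    (of fun _ _ : n => (1 : R)) *ᵥ u = fun _ => ∑ j, u j := by
  ext; simp [mulVec, dotProduct]

theorem Matrix.dotProduct_add_smul_allOnes_mulVec (G : Matrix n n ℝ) (ζ : ℝ) (u : n → ℝ) :
    u ⬝ᵥ (G + ζ • of fun _ _ : n => (1 : ℝ)) *ᵥ u = u ⬝ᵥ G *ᵥ u + ζ * (∑ i, u i) ^ 2 := by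
  rw [add_mulVec, smul_mulVec, allOnes_mulVec, dotProduct_add, dotProduct_smul, smul_eq_mul, sq]
  simp [dotProduct, Finset.sum_mul]

theorem Matrix.PosSemidef.posDef_add_smul_allOnes [Nonempty n] {G : Matrix n n ℝ}
    (hG : G.PosSemidef) (hker : ∀ u : n → ℝ, G *ᵥ u = 0 → ∃ c : ℝ, u = fun _ => c)
    {ζ : ℝ} (hζ : 0 < ζ) : (G + ζ • of fun _ _ : n => (1 : ℝ)).PosDef := by
  refine .of_dotProduct_mulVec_pos ?_ fun u hu => ?_
  · exact isHermitian_iff_isSymm.mpr <|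
      (isHermitian_iff_isSymm.mp hG.isHermitian).add ((IsSymm.ext fun _ _ => rfl).smul ζ)
  rw [star_trivial, dotProduct_add_smul_allOnes_mulVec]
  have hGu : 0 ≤ u ⬝ᵥ G *ᵥ u := by simpa using hG.dotProduct_mulVec_nonneg u
  rcases eq_or_ne (∑ i, u i) 0 with hsum | hsum
  · suffices u ⬝ᵥ G *ᵥ u ≠ 0 by rw [hsum]; positivity
    intro h0
    obtain ⟨c, rfl⟩ := hker u ((hG.dotProduct_mulVec_zero_iff u).mp (by simpa using h0))
    have hc : c = 0 := by simpa [Finset.card_univ] using hsum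
    exact hu (funext fun _ => hc)
  · positivity

theorem Matrix.mulVec_eq_of_add_smul_allOnes_mulVec_eq [Nonempty n] {G : Matrix n n ℝ}
    (hG : G.IsSymm) (hGe : G *ᵥ (fun _ => 1) = 0) {ζ : ℝ} (hζ : ζ ≠ 0) {x v : n → ℝ}
    (hx : ∑ i, x i = 0) (hv : (G + ζ • of fun _ _ : n => (1 : ℝ)) *ᵥ v = x) : G *ᵥ v = x := by
  rw [add_mulVec, smul_mulVec, allOnes_mulVec] at hv
  have hGv : ∑ i, (G *ᵥ v) i = 0 := by
    have : (fun _ => 1) ⬝ᵥ G *ᵥ v = 0 := by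
      rw [dotProduct_mulVec, ← mulVec_transpose, hG.eq, hGe, zero_dotProduct]
    simpa [dotProduct] using this
  have hsum : ∑ i, v i = 0 := by
    have := congrArg (fun w => ∑ i, w i) hv
    simpa [Finset.sum_add_distrib, hGv, hx, hζ] using this
  simpa [hsum, ← Pi.zero_def] using hv

end

theorem stmt_7_general (N : ℕ) (hN : 2 ≤ N) (G : Matrix (Fin N) (Fin N) ℝ)
    (hpsd : G.PosSemidef)
    (hGe : G.mulVec (fun _ => (1 : ℝ)) = 0)
    (hker : ∀ u : Fin N → ℝ, G.mulVec u = 0 → ∃ c : ℝ, u = fun _ => c)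
    (ζ : ℝ) (hζ : 0 < ζ) :
    (G + ζ • Matrix.of (fun _ _ : Fin N => (1 : ℝ))).PosDef ∧
    IsUnit (G + ζ • Matrix.of (fun _ _ : Fin N => (1 : ℝ))) ∧
    ∀ x : Fin N → ℝ, (∑ i, x i = 0) →
      sSup {r : ℝ | ∃ u : Fin N → ℝ,
          (∑ i, ∑ j, u i * G i j * u j) ≤ 1 ∧ r = ∑ i, x i * u i}
        = Real.sqrt (∑ i, ∑ j,
            x i * (G + ζ • Matrix.of (fun _ _ : Fin N => (1 : ℝ)))⁻¹ i j * x j) := by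
  have : Nonempty (Fin N) := ⟨⟨0, by omega⟩⟩
  have hpd := hpsd.posDef_add_smul_allOnes hker hζ
  refine ⟨hpd, hpd.isUnit, fun x hx => ?_⟩
  set H := G + ζ • of fun _ _ : Fin N => (1 : ℝ)
  set v := H⁻¹ *ᵥ x
  have hHv : H *ᵥ v = x := by
    rw [mulVec_mulVec, mul_nonsing_inv _ ((isUnit_iff_isUnit_det H).mp hpd.isUnit), one_mulVec]
  have hGv : G *ᵥ v = x := mulVec_eq_of_add_smul_allOnes_mulVec_eq
    (isHermitian_iff_isSymm.mp hpsd.isHermitian) hGe hζ.ne' hx hHv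
  have hquad (A : Matrix (Fin N) (Fin N) ℝ) (u w : Fin N → ℝ) :
      ∑ i, ∑ j, u i * A i j * w j = u ⬝ᵥ A *ᵥ w := by
    rw [← toBilin'_apply, toBilin'_apply']
  simp_rw [hquad]
  change _ = √(x ⬝ᵥ v)
  rw [← hGv, dotProduct_comm]
  exact (hpsd.isGreatest_dotProduct_mulVec v).csSup_eq

/-- If `G` is symmetric PSD with kernel spanned by the all-ones
vector `e`, then for every `ζ > 0` the matrix `G + ζ e eᵀ` is positive definite
(hence invertible) and, for `x ∈ S`, the dual norm
`sup{⟨x,u⟩ : uᵀGu ≤ 1}` equals `√(xᵀ (G + ζ e eᵀ)⁻¹ x)`. -/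
theorem stmt_7 (N : ℕ) (hN : 2 ≤ N) (G : Matrix (Fin N) (Fin N) ℝ)
    (hsym : G.IsSymm) (hpsd : G.PosSemidef)
    (hGe : G.mulVec (fun _ => (1 : ℝ)) = 0)
    (hker : ∀ u : Fin N → ℝ, G.mulVec u = 0 → ∃ c : ℝ, u = fun _ => c)
    (ζ : ℝ) (hζ : 0 < ζ) :
    (G + ζ • Matrix.of (fun _ _ : Fin N => (1 : ℝ))).PosDef ∧
    IsUnit (G + ζ • Matrix.of (fun _ _ : Fin N => (1 : ℝ))) ∧
    ∀ x : Fin N → ℝ, (∑ i, x i = 0) →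
      sSup {r : ℝ | ∃ u : Fin N → ℝ,
          (∑ i, ∑ j, u i * G i j * u j) ≤ 1 ∧ r = ∑ i, x i * u i}
        = Real.sqrt (∑ i, ∑ j,
            x i * (G + ζ • Matrix.of (fun _ _ : Fin N => (1 : ℝ)))⁻¹ i j * x j) :=
  stmt_7_general N hN G hpsd hGe hker ζ hζ
end

section
/- Let R > 0 and let (Δ_k)_{k≥0} be a sequence of nonnegative real numbers satisfying Δ_{l+1} ≤ Δ_l − Δ_l² / (2R²) for every l ≥ 0. Then Δ_k ≤ 2R²/k for every k ≥ 1. -/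
/-!
Write `C = 2R²` and `f(x) = x - x²/C`. The invariant `Δ_k · k ≤ C` holds trivially at `k = 0`
and is propagated by one step of the recursion: if `x · n ≤ C` then `f(x) · (n + 1) ≤ C`.
Indeed, either `x ≤ C/(n+1)` already and `f(x) ≤ x`, or `C < (n+1) x`, and then
`(n+1) x - C ≤ x ≤ (n+1) x²/C`.
-/

lemma sub_sq_div_mul_succ_le {C x : ℝ} (hC : 0 < C) (hx : 0 ≤ x) {n : ℕ} (hxn : x * n ≤ C) :
    (x - x ^ 2 / C) * (n + 1) ≤ C := by
  have hsq : 0 ≤ x ^ 2 / C := by positivity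
  rcases le_or_gt (x * (n + 1)) C with hsmall | hlarge
  · nlinarith
  · have hx_le : x ≤ x ^ 2 / C * (n + 1) := by
      rw [div_mul_eq_mul_div, le_div_iff₀ hC]
      nlinarith
    linarith

lemma mul_le_of_le_sub_sq_div {C : ℝ} (hC : 0 < C) {Δ : ℕ → ℝ} (hnn : ∀ k, 0 ≤ Δ k)
    (hrec : ∀ l, Δ (l + 1) ≤ Δ l - Δ l ^ 2 / C) (k : ℕ) : Δ k * k ≤ C := by
  induction k with
  | zero => simpa using hC.le
  | succ k ih =>
    push_cast
    calc Δ (k + 1) * (k + 1) ≤ (Δ k - Δ k ^ 2 / C) * (k + 1) := by gcongr; exact hrec k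
      _ ≤ C := sub_sq_div_mul_succ_le hC (hnn k) ih

/-- A nonnegative sequence satisfying
`Δ_{l+1} ≤ Δ_l − Δ_l²/(2R²)` obeys `Δ_k ≤ 2R²/k` for all `k ≥ 1`. -/
theorem stmt_9 (R : ℝ) (hR : 0 < R) (Δ : ℕ → ℝ) (hnn : ∀ k, 0 ≤ Δ k)
    (hrec : ∀ l, Δ (l + 1) ≤ Δ l - (Δ l) ^ 2 / (2 * R ^ 2)) :
    ∀ k : ℕ, 1 ≤ k → Δ k ≤ 2 * R ^ 2 / k := by
  intro k hk
  rw [le_div_iff₀ (by exact_mod_cast hk)]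
  exact mul_le_of_le_sub_sq_div (by positivity) hnn hrec k
end

section
/- Let N ≥ 2, let G be an N×N symmetric positive semidefinite real matrix with G e = 0 and such that uᵀGu = 0 implies u is a scalar multiple of e, and let f : ℝ^N → ℝ be convex and differentiable. Suppose f attains its minimum value f* over S. Let (Ω, 𝓕, μ) be a probability space with a filtration (𝓕_k)_{k≥0}, let x⁰ ∈ S, and let (X_k)_{k≥0} be an adapted sequence of ℝ^N-valued random variables with X_0 = x⁰ almost surely, each f(X_k) integrable, and, almost surely for every k: X_k ∈ S, f(X_{k+1}) ≤ f(X_k), and E[f(X_{k+1}) | 𝓕_k] ≤ f(X_k) − (1/2) ∇f(X_k)ᵀ G ∇f(X_k). Suppose R > 0 is such that for every x ∈ S with f(x) ≤ f(x⁰) there exists a minimizer x* of f over S with ‖x − x*‖*_G ≤ R. Then for every k ≥ 1, E[f(X_k)] − f* ≤ 2R²/k. -/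
open MeasureTheory

/-- The gradient of `f : (Fin N → ℝ) → ℝ` at `x`, as a vector. -/
noncomputable def gradVec (N : ℕ) (f : (Fin N → ℝ) → ℝ) (x : Fin N → ℝ) :
    Fin N → ℝ :=
  fun i => fderiv ℝ f x (Pi.single i 1)

/-!
On the sublevel set, convexity and the definition of the dual norm give
`f x - f* ≤ ⟪∇f x, x - x*⟫ ≤ ‖x - x*‖*_G ‖∇f x‖_G ≤ R ‖∇f x‖_G`, where `‖g‖_G² = gᵀ G g`;
the dual norm is finite on `S` because the kernel condition makes `S` the range of `G`.
Squaring, taking expectations (Jensen) and inserting this into the expected descent inequality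
gives `δ (k+1) ≤ δ k - δ k ² / (2 R²)` for `δ k = E f(X_k) - f*`, and this recursion forces
`k δ k ≤ 2 R²`.
-/

lemma const_eq_zero_of_sum_const_eq_zero {ι : Type*} [Fintype ι] {c : ℝ} (h : ∑ _i : ι, c = 0) :
    (fun _ : ι => c) = 0 := by
  rcases isEmpty_or_nonempty ι with hι | hι
  · exact Subsingleton.elim _ _
  · ext
    simp_all [Fintype.card_ne_zero]

namespace Matrix

variable {ι : Type*} [Fintype ι]

lemma sum_sum_mul_mul_eq_dotProduct_mulVec (G : Matrix ι ι ℝ) (u v : ι → ℝ) :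
    ∑ i, ∑ j, u i * G i j * v j = u ⬝ᵥ G *ᵥ v := by
  simp [dotProduct, mulVec, Finset.mul_sum, mul_assoc]

/-- `sSup` of a set that is not bounded above is `0`; the set is bounded above for `w ∈ S`
(see `PosSemidef.dotProduct_le_dualNorm`). -/
noncomputable def dualNorm (G : Matrix ι ι ℝ) (w : ι → ℝ) : ℝ :=
  sSup {r : ℝ | ∃ u : ι → ℝ, u ⬝ᵥ G *ᵥ u ≤ 1 ∧ r = w ⬝ᵥ u}

lemma of_const_one_mulVec (u : ι → ℝ) :
    (of fun _ _ => 1 : Matrix ι ι ℝ) *ᵥ u = fun _ => ∑ i, u i := by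
  ext; simp [mulVec, dotProduct]

variable {G : Matrix ι ι ℝ}

lemma PosSemidef.dotProduct_mulVec_self_nonneg (hG : G.PosSemidef) (u : ι → ℝ) :
    0 ≤ u ⬝ᵥ G *ᵥ u := by
  simpa using hG.dotProduct_mulVec_nonneg u

lemma PosSemidef.mulVec_dotProduct_comm (hG : G.PosSemidef) (u v : ι → ℝ) :
    G *ᵥ u ⬝ᵥ v = u ⬝ᵥ G *ᵥ v := by
  rw [dotProduct_comm, dotProduct_mulVec, ← mulVec_transpose,
    (isHermitian_iff_isSymm.mp hG.isHermitian).eq, dotProduct_comm]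

lemma PosSemidef.sum_mulVec_eq_zero (hG : G.PosSemidef) (hGe : G *ᵥ (fun _ => 1) = 0)
    (u : ι → ℝ) : ∑ i, (G *ᵥ u) i = 0 := by
  have := hG.mulVec_dotProduct_comm (fun _ => 1) u
  rw [hGe, zero_dotProduct] at this
  simpa [dotProduct] using this.symm

lemma PosSemidef.mulVec_add_of_const_one_injective (hG : G.PosSemidef)
    (hker : ∀ u : ι → ℝ, u ⬝ᵥ G *ᵥ u = 0 → ∃ c : ℝ, u = fun _ => c) :
    Function.Injective (G + of fun _ _ => (1 : ℝ)).mulVec := by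
  suffices h : ∀ d, (G + of fun _ _ => (1 : ℝ)) *ᵥ d = 0 → d = 0 from
    fun u v huv => sub_eq_zero.mp (h _ (by rw [mulVec_sub, huv, sub_self]))
  intro d hd
  rw [add_mulVec, of_const_one_mulVec] at hd
  have hsq : d ⬝ᵥ G *ᵥ d + (∑ i, d i) ^ 2 = 0 := by
    have := congrArg (d ⬝ᵥ ·) hd
    simp only [dotProduct_add, dotProduct_zero] at this
    simpa [dotProduct, ← Finset.sum_mul, sq] using this
  have hq := hG.dotProduct_mulVec_self_nonneg d
  obtain ⟨c, rfl⟩ := hker d (by nlinarith [sq_nonneg (∑ i, d i)])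
  exact const_eq_zero_of_sum_const_eq_zero (by nlinarith [sq_nonneg (∑ _i : ι, c)])

/-- Solve `(G + 𝟙𝟙ᵀ) z = w`; summing the coordinates shows that the `𝟙𝟙ᵀ z` part vanishes. -/
lemma PosSemidef.exists_mulVec_eq (hG : G.PosSemidef) (hGe : G *ᵥ (fun _ => 1) = 0)
    (hker : ∀ u : ι → ℝ, u ⬝ᵥ G *ᵥ u = 0 → ∃ c : ℝ, u = fun _ => c)
    {w : ι → ℝ} (hw : ∑ i, w i = 0) : ∃ z, G *ᵥ z = w := by
  classical
  obtain ⟨z, hz⟩ := mulVec_surjective_iff_isUnit.mpr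
    (mulVec_injective_iff_isUnit.mp (hG.mulVec_add_of_const_one_injective hker)) w
  rw [add_mulVec, of_const_one_mulVec] at hz
  have hsum : ∑ _i : ι, ∑ j, z j = 0 := by
    rw [← hw, ← hz]
    simp [Finset.sum_add_distrib, hG.sum_mulVec_eq_zero hGe]
  exact ⟨z, by rw [← hz, const_eq_zero_of_sum_const_eq_zero hsum, add_zero]⟩

lemma PosSemidef.dotProduct_le_dualNorm (hG : G.PosSemidef) (hGe : G *ᵥ (fun _ => 1) = 0)
    (hker : ∀ u : ι → ℝ, u ⬝ᵥ G *ᵥ u = 0 → ∃ c : ℝ, u = fun _ => c)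
    {w : ι → ℝ} (hw : ∑ i, w i = 0) {u : ι → ℝ} (hu : u ⬝ᵥ G *ᵥ u ≤ 1) :
    w ⬝ᵥ u ≤ dualNorm G w := by
  obtain ⟨z, rfl⟩ := hG.exists_mulVec_eq hGe hker hw
  refine le_csSup ⟨(z ⬝ᵥ G *ᵥ z + 1) / 2, ?_⟩ ⟨u, hu, rfl⟩
  rintro _ ⟨v, hv, rfl⟩
  have hcomm : v ⬝ᵥ G *ᵥ z = z ⬝ᵥ G *ᵥ v :=
    (hG.mulVec_dotProduct_comm v z).symm.trans (dotProduct_comm _ _)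
  have hexpand := hG.dotProduct_mulVec_self_nonneg (z - v)
  simp only [mulVec_sub, dotProduct_sub, sub_dotProduct] at hexpand
  rw [hG.mulVec_dotProduct_comm]
  linarith

lemma PosSemidef.dotProduct_le_dualNorm_mul_sqrt (hG : G.PosSemidef)
    (hGe : G *ᵥ (fun _ => 1) = 0)
    (hker : ∀ u : ι → ℝ, u ⬝ᵥ G *ᵥ u = 0 → ∃ c : ℝ, u = fun _ => c)
    {w : ι → ℝ} (hw : ∑ i, w i = 0) (g : ι → ℝ) :
    w ⬝ᵥ g ≤ dualNorm G w * √(g ⬝ᵥ G *ᵥ g) := by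
  rcases (hG.dotProduct_mulVec_self_nonneg g).eq_or_lt with hg | hg
  · rw [← hg, Real.sqrt_zero, mul_zero]
    by_contra! hpos
    -- every multiple of `g` lies in the unit ball of the seminorm, so `w ⬝ᵥ g ≤ 0`
    have := hG.dotProduct_le_dualNorm hGe hker hw (u := ((dualNorm G w + 1) / (w ⬝ᵥ g)) • g)
      (by simp [mulVec_smul, ← hg])
    rw [dotProduct_smul, smul_eq_mul, div_mul_cancel₀ _ hpos.ne'] at this
    linarith
  · have hsqrt : 0 < √(g ⬝ᵥ G *ᵥ g) := Real.sqrt_pos.mpr hg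
    have := hG.dotProduct_le_dualNorm hGe hker hw (u := (√(g ⬝ᵥ G *ᵥ g))⁻¹ • g) (by
      rw [mulVec_smul, dotProduct_smul, smul_dotProduct, smul_eq_mul, smul_eq_mul, ← mul_assoc,
        ← mul_inv, Real.mul_self_sqrt hg.le, inv_mul_cancel₀ hg.ne'])
    rw [dotProduct_smul, smul_eq_mul, inv_mul_le_iff₀ hsqrt] at this
    linarith

end Matrix

open Matrix Set

lemma ConvexOn.add_le_of_hasFDerivAt {E : Type*} [NormedAddCommGroup E] [NormedSpace ℝ E]
    {s : Set E} {f : E → ℝ} {f' : E →L[ℝ] ℝ} {x y : E} (hf : ConvexOn ℝ s f)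
    (hf' : HasFDerivAt f f' x) (hx : x ∈ s) (hy : y ∈ s) : f x + f' (y - x) ≤ f y := by
  let ℓ : ℝ →ᵃ[ℝ] E := AffineMap.lineMap x y
  have hderiv : HasDerivAt (f ∘ ℓ) (f' (y - x)) 0 := by
    refine HasFDerivAt.comp_hasDerivAt (0 : ℝ) ?_ AffineMap.hasDerivAt_lineMap
    simpa [ℓ] using hf'
  have := (hf.comp_affineMap ℓ).le_slope_of_hasDerivAt (by simpa [ℓ]) (by simpa [ℓ]) one_pos hderiv
  simp only [slope_def_field, Function.comp_apply, ℓ, AffineMap.lineMap_apply_zero,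
    AffineMap.lineMap_apply_one, sub_zero, div_one] at this
  linarith

section Gradient

variable {N : ℕ} {f : (Fin N → ℝ) → ℝ} {x : Fin N → ℝ}

lemma fderiv_apply_eq_dotProduct_gradVec (v : Fin N → ℝ) :
    fderiv ℝ f x v = v ⬝ᵥ gradVec N f x := by
  rw [← ContinuousLinearMap.coe_coe, LinearMap.pi_apply_eq_sum_univ]
  refine Finset.sum_congr rfl fun i _ => ?_
  have hsingle : (fun j => if i = j then (1 : ℝ) else 0) = Pi.single i 1 := by
    ext j; rw [Pi.single_apply]; exact if_congr eq_comm rfl rfl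
  simp only [gradVec, smul_eq_mul, hsingle, ContinuousLinearMap.coe_coe]

lemma measurable_gradVec : Measurable (gradVec N f) :=
  measurable_pi_lambda _ fun i => measurable_fderiv_apply_const ℝ f (Pi.single i 1)

lemma measurable_gradVec_dotProduct_mulVec (G : Matrix (Fin N) (Fin N) ℝ) :
    Measurable fun x => gradVec N f x ⬝ᵥ G *ᵥ gradVec N f x :=
  (by fun_prop : Continuous fun u : Fin N → ℝ => u ⬝ᵥ G *ᵥ u).measurable.comp measurable_gradVec

lemma ConvexOn.sub_le_dotProduct_gradVec (hf : ConvexOn ℝ univ f) (hfx : DifferentiableAt ℝ f x)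
    (y : Fin N → ℝ) : f x - f y ≤ (x - y) ⬝ᵥ gradVec N f x := by
  have := hf.add_le_of_hasFDerivAt hfx.hasFDerivAt (mem_univ x) (mem_univ y)
  rw [fderiv_apply_eq_dotProduct_gradVec, ← neg_sub, neg_dotProduct] at this
  linarith

lemma sq_sub_le_of_dualNorm_le {G : Matrix (Fin N) (Fin N) ℝ} (hG : G.PosSemidef)
    (hGe : G *ᵥ (fun _ => 1) = 0)
    (hker : ∀ u : Fin N → ℝ, u ⬝ᵥ G *ᵥ u = 0 → ∃ c : ℝ, u = fun _ => c)
    (hf : ConvexOn ℝ univ f) (hfx : DifferentiableAt ℝ f x) {y : Fin N → ℝ}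
    (hx : ∑ i, x i = 0) (hy : ∑ i, y i = 0) (hyx : f y ≤ f x) {R : ℝ}
    (hR : dualNorm G (x - y) ≤ R) :
    (f x - f y) ^ 2 ≤ R ^ 2 * (gradVec N f x ⬝ᵥ G *ᵥ gradVec N f x) := by
  have hxy : ∑ i, (x - y) i = 0 := by simp [Finset.sum_sub_distrib, hx, hy]
  have hle : f x - f y ≤ R * √(gradVec N f x ⬝ᵥ G *ᵥ gradVec N f x) :=
    calc f x - f y ≤ (x - y) ⬝ᵥ gradVec N f x := hf.sub_le_dotProduct_gradVec hfx y
      _ ≤ dualNorm G (x - y) * √(gradVec N f x ⬝ᵥ G *ᵥ gradVec N f x) :=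
        hG.dotProduct_le_dualNorm_mul_sqrt hGe hker hxy _
      _ ≤ _ := mul_le_mul_of_nonneg_right hR (Real.sqrt_nonneg _)
  calc (f x - f y) ^ 2 ≤ (R * √(gradVec N f x ⬝ᵥ G *ᵥ gradVec N f x)) ^ 2 :=
        pow_le_pow_left₀ (sub_nonneg.mpr hyx) hle 2
    _ = _ := by rw [mul_pow, Real.sq_sqrt (hG.dotProduct_mulVec_self_nonneg _)]

end Gradient

section Descent

variable {Ω : Type*} {m m₀ : MeasurableSpace Ω} {μ : Measure Ω} [IsProbabilityMeasure μ]

lemma sq_integral_le_integral_sq {Y : Ω → ℝ} (hY : AEStronglyMeasurable Y μ)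
    (hY2 : Integrable (fun ω => Y ω ^ 2) μ) : (∫ ω, Y ω ∂μ) ^ 2 ≤ ∫ ω, Y ω ^ 2 ∂μ := by
  have := ProbabilityTheory.variance_nonneg Y μ
  rw [ProbabilityTheory.variance_eq_sub ((memLp_two_iff_integrable_sq hY).mpr hY2)] at this
  simpa using this

lemma integral_le_sub_sq_div_of_condExp_le (hm : m ≤ m₀) {Y Y' D : Ω → ℝ} {c R : ℝ}
    (hR : R ≠ 0) (hY : Integrable Y μ) (hD : AEStronglyMeasurable D μ)
    (hD₀ : ∀ᵐ ω ∂μ, 0 ≤ D ω) (hdesc : ∀ᵐ ω ∂μ, μ[Y' | m] ω ≤ Y ω - 1 / 2 * D ω)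
    (hgap : ∀ᵐ ω ∂μ, (Y ω - c) ^ 2 ≤ R ^ 2 * D ω) :
    ∫ ω, Y' ω ∂μ ≤ ∫ ω, Y ω ∂μ - (∫ ω, Y ω ∂μ - c) ^ 2 / (2 * R ^ 2) := by
  have hDint : Integrable D μ := by
    refine ((hY.sub (integrable_condExp (m := m) (f := Y'))).const_mul 2).mono' hD ?_
    filter_upwards [hD₀, hdesc] with ω h₀ h
    rw [Real.norm_of_nonneg h₀]
    simp only [Pi.sub_apply]
    linarith
  have hYc : Integrable (fun ω => Y ω - c) μ := hY.sub (integrable_const c)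
  have hgap_int : Integrable (fun ω => (Y ω - c) ^ 2) μ := by
    refine (hDint.const_mul (R ^ 2)).mono' (hYc.aestronglyMeasurable.pow 2) ?_
    filter_upwards [hgap] with ω h
    rwa [Real.norm_of_nonneg (sq_nonneg _)]
  have hdescent : ∫ ω, Y' ω ∂μ ≤ ∫ ω, Y ω ∂μ - 1 / 2 * ∫ ω, D ω ∂μ := by
    rw [← integral_condExp hm, ← integral_const_mul, ← integral_sub hY (hDint.const_mul _)]
    exact integral_mono_ae integrable_condExp (hY.sub (hDint.const_mul _)) hdesc
  have hgap_integral : (∫ ω, Y ω ∂μ - c) ^ 2 ≤ R ^ 2 * ∫ ω, D ω ∂μ := by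
    calc (∫ ω, Y ω ∂μ - c) ^ 2 = (∫ ω, (Y ω - c) ∂μ) ^ 2 := by
          rw [integral_sub hY (integrable_const c)]; simp
      _ ≤ ∫ ω, (Y ω - c) ^ 2 ∂μ := sq_integral_le_integral_sq hYc.aestronglyMeasurable hgap_int
      _ ≤ ∫ ω, R ^ 2 * D ω ∂μ := integral_mono_ae hgap_int (hDint.const_mul _) hgap
      _ = R ^ 2 * ∫ ω, D ω ∂μ := integral_const_mul _ _
  have hR2 : 0 < 2 * R ^ 2 := by positivity
  have : (∫ ω, Y ω ∂μ - c) ^ 2 / (2 * R ^ 2) ≤ 1 / 2 * ∫ ω, D ω ∂μ := by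
    rw [div_le_iff₀ hR2]; linarith
  linarith

end Descent

lemma natCast_mul_le_of_le_sub_sq_div {δ : ℕ → ℝ} {c : ℝ} (hc : 0 < c)
    (h : ∀ k, δ (k + 1) ≤ δ k - δ k ^ 2 / c) (k : ℕ) : k * δ k ≤ c := by
  induction k with
  | zero => simpa using hc.le
  | succ k ih =>
    set a := δ k
    have hk : (0 : ℝ) ≤ k := k.cast_nonneg
    have hstep : (k + 1 : ℝ) * (a - a ^ 2 / c) ≤ c := by
      have : (k + 1 : ℝ) * (a - a ^ 2 / c) = (k + 1) * (a * (c - a)) / c := by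
        field_simp
      rw [this, div_le_iff₀ hc]
      rcases le_or_gt a 0 with ha | ha
      · nlinarith [mul_nonpos_of_nonpos_of_nonneg ha (by linarith : 0 ≤ c - a)]
      rcases le_or_gt c a with hca | hca
      · nlinarith [mul_nonpos_of_nonneg_of_nonpos ha.le (by linarith : c - a ≤ 0)]
      · nlinarith [mul_le_mul_of_nonneg_right ih (by linarith : 0 ≤ c - a)]
    push_cast
    nlinarith [h k]

theorem stmt_10_general (N : ℕ) (G : Matrix (Fin N) (Fin N) ℝ)
    (hpsd : G.PosSemidef)
    (hGe : G.mulVec (fun _ => (1 : ℝ)) = 0)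
    (hker : ∀ u : Fin N → ℝ, (∑ i, ∑ j, u i * G i j * u j) = 0 →
      ∃ c : ℝ, u = fun _ => c)
    (f : (Fin N → ℝ) → ℝ) (hconv : ConvexOn ℝ Set.univ f)
    (hdiff : Differentiable ℝ f)
    (fstar : ℝ)
    (hattain : ∃ xs : Fin N → ℝ, (∑ i, xs i = 0) ∧ f xs = fstar ∧
      ∀ x : Fin N → ℝ, (∑ i, x i = 0) → fstar ≤ f x)
    {Ω : Type} [MeasurableSpace Ω] (μ : Measure Ω) [IsProbabilityMeasure μ]
    (𝓕 : Filtration ℕ ‹MeasurableSpace Ω›)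
    (x0 : Fin N → ℝ)
    (X : ℕ → Ω → (Fin N → ℝ)) (hadapt : Adapted 𝓕 X)
    (hX0 : ∀ᵐ ω ∂μ, X 0 ω = x0)
    (hint : ∀ k, Integrable (fun ω => f (X k ω)) μ)
    (hfeas : ∀ k, ∀ᵐ ω ∂μ, ∑ i, X k ω i = 0)
    (hdec : ∀ k, ∀ᵐ ω ∂μ, f (X (k + 1) ω) ≤ f (X k ω))
    (hexp : ∀ k, ∀ᵐ ω ∂μ,
      (μ[(fun ω' => f (X (k + 1) ω')) | 𝓕 k]) ω ≤ f (X k ω) -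
        (1 / 2) * ∑ i, ∑ j,
          gradVec N f (X k ω) i * G i j * gradVec N f (X k ω) j)
    (R : ℝ) (hR : 0 < R)
    (hRad : ∀ x : Fin N → ℝ, (∑ i, x i = 0) → f x ≤ f x0 →
      ∃ xs : Fin N → ℝ, (∑ i, xs i = 0) ∧ f xs = fstar ∧
        sSup {r : ℝ | ∃ u : Fin N → ℝ,
          (∑ i, ∑ j, u i * G i j * u j) ≤ 1 ∧
            r = ∑ i, (x i - xs i) * u i} ≤ R) :
    ∀ k : ℕ, 1 ≤ k → (∫ ω, f (X k ω) ∂μ) - fstar ≤ 2 * R ^ 2 / k := by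
  simp only [sum_sum_mul_mul_eq_dotProduct_mulVec] at hker hexp hRad
  obtain ⟨-, -, -, hmin⟩ := hattain
  have hsublevel : ∀ k, ∀ᵐ ω ∂μ, f (X k ω) ≤ f x0 := by
    intro k
    induction k with
    | zero => filter_upwards [hX0] with ω h; rw [h]
    | succ k ih => filter_upwards [ih, hdec k] with ω h₁ h₂; exact h₂.trans h₁
  have hgap : ∀ k, ∀ᵐ ω ∂μ, (f (X k ω) - fstar) ^ 2 ≤
      R ^ 2 * (gradVec N f (X k ω) ⬝ᵥ G *ᵥ gradVec N f (X k ω)) := by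
    intro k
    filter_upwards [hfeas k, hsublevel k] with ω hS hle
    obtain ⟨xs, hxs, rfl, hdual⟩ := hRad _ hS hle
    exact sq_sub_le_of_dualNorm_le hpsd hGe hker hconv (hdiff _) hS hxs (hmin _ hS) hdual
  have hrec (k : ℕ) : ∫ ω, f (X (k + 1) ω) ∂μ - fstar ≤ (∫ ω, f (X k ω) ∂μ - fstar) -
      (∫ ω, f (X k ω) ∂μ - fstar) ^ 2 / (2 * R ^ 2) := by
    have hD := (measurable_gradVec_dotProduct_mulVec (f := f) G).comp ((hadapt k).mono (𝓕.le k) le_rfl)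
    have := integral_le_sub_sq_div_of_condExp_le (𝓕.le k) hR.ne' (hint k) hD.aestronglyMeasurable
      (ae_of_all _ fun ω => hpsd.dotProduct_mulVec_self_nonneg _) (hexp k) (hgap k)
    linarith
  intro k hk
  have := natCast_mul_le_of_le_sub_sq_div (δ := fun k => ∫ ω, f (X k ω) ∂μ - fstar)
    (by positivity) hrec k
  rw [le_div_iff₀ (by exact_mod_cast hk)]
  linarith

/-- Sublinear rate `E[f(X_k)] − f* ≤ 2R²/k` for a random descent
scheme with expected decrease `(1/2) ∇f(X_k)ᵀ G ∇f(X_k)`. -/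
theorem stmt_10 (N : ℕ) (hN : 2 ≤ N) (G : Matrix (Fin N) (Fin N) ℝ)
    (hsym : G.IsSymm) (hpsd : G.PosSemidef)
    (hGe : G.mulVec (fun _ => (1 : ℝ)) = 0)
    (hker : ∀ u : Fin N → ℝ, (∑ i, ∑ j, u i * G i j * u j) = 0 →
      ∃ c : ℝ, u = fun _ => c)
    (f : (Fin N → ℝ) → ℝ) (hconv : ConvexOn ℝ Set.univ f)
    (hdiff : Differentiable ℝ f)
    (fstar : ℝ)
    (hattain : ∃ xs : Fin N → ℝ, (∑ i, xs i = 0) ∧ f xs = fstar ∧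
      ∀ x : Fin N → ℝ, (∑ i, x i = 0) → fstar ≤ f x)
    {Ω : Type} [MeasurableSpace Ω] (μ : Measure Ω) [IsProbabilityMeasure μ]
    (𝓕 : Filtration ℕ ‹MeasurableSpace Ω›)
    (x0 : Fin N → ℝ) (hx0 : ∑ i, x0 i = 0)
    (X : ℕ → Ω → (Fin N → ℝ)) (hadapt : Adapted 𝓕 X)
    (hX0 : ∀ᵐ ω ∂μ, X 0 ω = x0)
    (hint : ∀ k, Integrable (fun ω => f (X k ω)) μ)
    (hfeas : ∀ k, ∀ᵐ ω ∂μ, ∑ i, X k ω i = 0)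
    (hdec : ∀ k, ∀ᵐ ω ∂μ, f (X (k + 1) ω) ≤ f (X k ω))
    (hexp : ∀ k, ∀ᵐ ω ∂μ,
      (μ[(fun ω' => f (X (k + 1) ω')) | 𝓕 k]) ω ≤ f (X k ω) -
        (1 / 2) * ∑ i, ∑ j,
          gradVec N f (X k ω) i * G i j * gradVec N f (X k ω) j)
    (R : ℝ) (hR : 0 < R)
    (hRad : ∀ x : Fin N → ℝ, (∑ i, x i = 0) → f x ≤ f x0 →
      ∃ xs : Fin N → ℝ, (∑ i, xs i = 0) ∧ f xs = fstar ∧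
        sSup {r : ℝ | ∃ u : Fin N → ℝ,
          (∑ i, ∑ j, u i * G i j * u j) ≤ 1 ∧
            r = ∑ i, (x i - xs i) * u i} ≤ R) :
    ∀ k : ℕ, 1 ≤ k → (∫ ω, f (X k ω) ∂μ) - fstar ≤ 2 * R ^ 2 / k :=
  stmt_10_general N G hpsd hGe hker f hconv hdiff fstar hattain μ 𝓕 x0 X hadapt hX0 hint hfeas hdec
    hexp R hR hRad
end

section
/- Let N ≥ 2, 2 ≤ τ ≤ N, and L_1, …, L_N > 0. For each subset 𝒮 ⊆ {1,…,N} with |𝒮| = τ, define the probability p_𝒮 = (Σ_{i∈𝒮} 1/L_i) / (C(N−1, τ−1) · Σ_{i=1}^N 1/L_i), where C(·,·) is the binomial coefficient. Then the p_𝒮 are nonnegative and sum to 1 over all τ-element subsets, and Σ_{𝒮 : |𝒮|=τ} p_𝒮 G_𝒮 = ((τ−1)/(N−1)) · ( D_L^{-1} − (1/(Σ_{i=1}^N 1/L_i)) · ℓ ℓᵀ ), where D_L is the diagonal matrix with diagonal entries L_1, …, L_N and ℓ ∈ ℝ^N is the vector with entries ℓ_i = 1/L_i. -/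
open Finset

theorem Nat.sub_one_mul_choose_sub_two {n k : ℕ} (hn : 2 ≤ n) (hk : 2 ≤ k) :
    (n - 1) * (n - 2).choose (k - 2) = (n - 1).choose (k - 1) * (k - 1) := by
  obtain ⟨n, rfl⟩ := Nat.exists_eq_add_of_le' hn
  obtain ⟨k, rfl⟩ := Nat.exists_eq_add_of_le' hk
  simpa using Nat.add_one_mul_choose_eq n k

theorem choose_sub_two_div_choose_sub_one {n k : ℕ} (hk : 2 ≤ k) (hkn : k ≤ n) :
    ((n - 2).choose (k - 2) : ℝ) / (n - 1).choose (k - 1) = ((k : ℝ) - 1) / ((n : ℝ) - 1) := by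
  have hn1 : (n : ℝ) - 1 ≠ 0 := by
    have : (2 : ℝ) ≤ n := by exact_mod_cast hk.trans hkn
    linarith
  have hC : ((n - 1).choose (k - 1) : ℝ) ≠ 0 := by
    exact_mod_cast (Nat.choose_pos (by omega)).ne'
  rw [div_eq_div_iff hC hn1]
  have := congrArg (Nat.cast : ℕ → ℝ) (Nat.sub_one_mul_choose_sub_two (hk.trans hkn) hk)
  push_cast [Nat.cast_sub (show 1 ≤ n by omega), Nat.cast_sub (show 1 ≤ k by omega)] at this
  linarith

namespace Finset

variable {α R : Type*} [Fintype α] [DecidableEq α] [CommSemiring R]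

theorem card_filter_powersetCard_univ_mem {τ : ℕ} (hτ : 1 ≤ τ) (i : α) :
    #{u ∈ (univ : Finset α).powersetCard τ | i ∈ u} = (Fintype.card α - 1).choose (τ - 1) := by
  simpa using card_filter_powersetCard_subset {i} univ τ (subset_univ _) (by simpa using hτ)

theorem card_filter_powersetCard_univ_mem_mem {τ : ℕ} (hτ : 2 ≤ τ) {i j : α} (hij : i ≠ j) :
    #{u ∈ (univ : Finset α).powersetCard τ | i ∈ u ∧ j ∈ u}
      = (Fintype.card α - 2).choose (τ - 2) := by
  have hcard : #({i, j} : Finset α) = 2 := card_pair hij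
  simpa [insert_subset_iff, hcard] using
    card_filter_powersetCard_subset {i, j} univ τ (subset_univ _) (hcard ▸ hτ)

theorem sum_sum_eq_sum_card_filter_mem_mul (F : Finset (Finset α)) (f : α → R) :
    ∑ u ∈ F, ∑ k ∈ u, f k = ∑ k, #{u ∈ F | k ∈ u} * f k := by
  rw [sum_comm' (t' := univ) (s' := fun k => {u ∈ F | k ∈ u}) (by simp [and_comm])]
  simp [sum_const, nsmul_eq_mul]

theorem sum_powersetCard_univ_sum {τ : ℕ} (hτ : 1 ≤ τ) (f : α → R) :
    ∑ u ∈ (univ : Finset α).powersetCard τ, ∑ k ∈ u, f k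
      = (Fintype.card α - 1).choose (τ - 1) * ∑ k, f k := by
  simp [sum_sum_eq_sum_card_filter_mem_mul, card_filter_powersetCard_univ_mem hτ, mul_sum]

theorem sum_filter_powersetCard_univ_mem_sum {τ : ℕ} (hτ : 2 ≤ τ) (i : α) (f : α → R) :
    ∑ u ∈ (univ : Finset α).powersetCard τ with i ∈ u, ∑ k ∈ u, f k
      = (Fintype.card α - 1).choose (τ - 1) * f i
        + (Fintype.card α - 2).choose (τ - 2) * ∑ k ∈ univ.erase i, f k := by
  rw [sum_sum_eq_sum_card_filter_mem_mul, ← add_sum_erase _ _ (mem_univ i), mul_sum]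
  simp only [filter_filter, and_self, card_filter_powersetCard_univ_mem (by omega : 1 ≤ τ)]
  congr 1
  refine sum_congr rfl fun k hk => ?_
  rw [card_filter_powersetCard_univ_mem_mem hτ (ne_of_mem_erase hk).symm]

end Finset

section GNmat

variable {N : ℕ} {L : Fin N → ℝ}

theorem sum_one_div_mul_GNmat_apply (hL : ∀ i, 0 < L i) (𝒮 : Finset (Fin N)) (i j : Fin N) :
    (∑ k ∈ 𝒮, 1 / L k) * GNmat N L 𝒮 i j =
      if i ∈ 𝒮 ∧ j ∈ 𝒮 then
        (if i = j then 1 / L i * ∑ k ∈ 𝒮, 1 / L k else 0) - 1 / (L i * L j)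
      else 0 := by
  simp only [GNmat, Matrix.of_apply]
  by_cases h𝒮 : i ∈ 𝒮 ∧ j ∈ 𝒮
  · have hs : 0 < ∑ k ∈ 𝒮, 1 / L k := sum_pos (fun k _ => one_div_pos.2 (hL k)) ⟨i, h𝒮.1⟩
    rw [if_pos h𝒮, if_pos h𝒮]
    field_simp
    split_ifs <;> ring
  · rw [if_neg h𝒮, if_neg h𝒮, mul_zero]

theorem sum_powersetCard_sum_one_div_mul_GNmat_apply (hL : ∀ i, 0 < L i) {τ : ℕ} (hτ : 2 ≤ τ)
    (i j : Fin N) :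
    ∑ 𝒮 ∈ univ.powersetCard τ, (∑ k ∈ 𝒮, 1 / L k) * GNmat N L 𝒮 i j =
      (N - 2).choose (τ - 2) *
        ((if i = j then 1 / L i * ∑ k, 1 / L k else 0) - 1 / (L i * L j)) := by
  simp only [sum_one_div_mul_GNmat_apply hL, ← sum_filter]
  by_cases hij : i = j
  · subst hij
    simp only [and_self, if_true, sum_sub_distrib, ← mul_sum, sum_const, nsmul_eq_mul,
      sum_filter_powersetCard_univ_mem_sum hτ, card_filter_powersetCard_univ_mem (by omega : 1 ≤ τ),
      Fintype.card_fin, ← add_sum_erase univ _ (mem_univ i)]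
    ring
  · simp only [hij, if_false, zero_sub, sum_neg_distrib, sum_const, nsmul_eq_mul,
      card_filter_powersetCard_univ_mem_mem hτ hij, Fintype.card_fin]
    ring

end GNmat

theorem stmt_13_general (N τ : ℕ) (hτ1 : 2 ≤ τ) (hτ2 : τ ≤ N)
    (L : Fin N → ℝ) (hL : ∀ i, 0 < L i)
    (p : Finset (Fin N) → ℝ)
    (hp : ∀ 𝒮 : Finset (Fin N), p 𝒮 =
      (∑ i ∈ 𝒮, 1 / L i) /
        (((N - 1).choose (τ - 1) : ℝ) * ∑ i, 1 / L i)) :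
    (∀ 𝒮 : Finset (Fin N), 0 ≤ p 𝒮) ∧
    (∑ 𝒮 ∈ Finset.univ.powersetCard τ, p 𝒮 = 1) ∧
    (∑ 𝒮 ∈ Finset.univ.powersetCard τ, p 𝒮 • GNmat N L 𝒮 =
      (((τ : ℝ) - 1) / ((N : ℝ) - 1)) • Matrix.of (fun i j : Fin N =>
        (if i = j then 1 / L i else 0) -
          (1 / (L i * L j)) / (∑ k, 1 / L k))) := by
  have : NeZero N := ⟨by omega⟩
  have hℓ : ∀ i, 0 < 1 / L i := fun i => one_div_pos.2 (hL i)
  have hS : 0 < ∑ i, 1 / L i := sum_pos (fun i _ => hℓ i) univ_nonempty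
  have hC : 0 < ((N - 1).choose (τ - 1) : ℝ) := by exact_mod_cast Nat.choose_pos (by omega)
  refine ⟨fun 𝒮 => ?_, ?_, ?_⟩
  · rw [hp]
    exact div_nonneg (sum_nonneg fun i _ => (hℓ i).le) (mul_pos hC hS).le
  · simp only [hp]
    rw [← sum_div, sum_powersetCard_univ_sum (by omega), Fintype.card_fin]
    exact div_self (mul_pos hC hS).ne'
  · ext i j
    simp only [Matrix.sum_apply, Matrix.smul_apply, Matrix.of_apply, smul_eq_mul, hp,
      div_mul_eq_mul_div, ← sum_div, sum_powersetCard_sum_one_div_mul_GNmat_apply hL hτ1,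
      ← choose_sub_two_div_choose_sub_one hτ1 hτ2]
    field_simp
    split_ifs <;> ring

/-- For the Lipschitz-dependent probabilities
`p_𝒮 = (∑_{i∈𝒮} 1/L_i) / (C(N−1,τ−1) ∑_i 1/L_i)` over `τ`-element subsets
`𝒮`, the probabilities are nonnegative, sum to one, and
`∑_𝒮 p_𝒮 G_𝒮 = ((τ−1)/(N−1)) (D_L⁻¹ − (1/∑_i 1/L_i) ℓℓᵀ)`. -/
theorem stmt_13 (N τ : ℕ) (hN : 2 ≤ N) (hτ1 : 2 ≤ τ) (hτ2 : τ ≤ N)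
    (L : Fin N → ℝ) (hL : ∀ i, 0 < L i)
    (p : Finset (Fin N) → ℝ)
    (hp : ∀ 𝒮 : Finset (Fin N), p 𝒮 =
      (∑ i ∈ 𝒮, 1 / L i) /
        (((N - 1).choose (τ - 1) : ℝ) * ∑ i, 1 / L i)) :
    (∀ 𝒮 : Finset (Fin N), 0 ≤ p 𝒮) ∧
    (∑ 𝒮 ∈ Finset.univ.powersetCard τ, p 𝒮 = 1) ∧
    (∑ 𝒮 ∈ Finset.univ.powersetCard τ, p 𝒮 • GNmat N L 𝒮 =
      (((τ : ℝ) - 1) / ((N : ℝ) - 1)) • Matrix.of (fun i j : Fin N =>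
        (if i = j then 1 / L i else 0) -
          (1 / (L i * L j)) / (∑ k, 1 / L k))) :=
  stmt_13_general N τ hτ1 hτ2 L hL p hp
end

section
/- Let N ≥ 2, 2 ≤ τ ≤ N with τ < N or N ≥ 2, and L_1, …, L_N > 0. Let G = ((τ−1)/(N−1)) · ( D_L^{-1} − (1/(Σ_{i=1}^N 1/L_i)) · ℓ ℓᵀ ), where D_L is the diagonal matrix with diagonal entries L_1, …, L_N and ℓ ∈ ℝ^N has entries ℓ_i = 1/L_i. Then for every x ∈ S, ( sup{⟨x,u⟩ : u ∈ ℝ^N, uᵀGu ≤ 1} )² = ((N−1)/(τ−1)) · Σ_{i=1}^N L_i x_i². -/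
/-! The quadratic form of `G` is `c` times a weighted variance: with `c = (τ-1)/(N-1)` and
`m = (∑ᵢ uᵢ / Lᵢ) / ∑ᵢ 1 / Lᵢ`, one has `uᵀGu = c ∑ᵢ (uᵢ - m)² / Lᵢ`. Since `∑ᵢ xᵢ = 0`, the
pairing `⟨x, u⟩` equals `⟨x, u - m⟩`, so weighted Cauchy–Schwarz gives
`⟨x, u⟩² ≤ c⁻¹ (∑ᵢ Lᵢ xᵢ²) uᵀGu`, with equality at `uᵢ ∝ Lᵢ xᵢ`. -/

open Finset

theorem sq_sSup_eq_of_sq_le_mul {V : Type*} [AddCommGroup V] [Module ℝ V] {f q : V → ℝ}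
    (hf : ∀ (a : ℝ) u, f (a • u) = a * f u) (hq : ∀ (a : ℝ) u, q (a • u) = a ^ 2 * q u)
    {K : ℝ} (hK : 0 ≤ K) (hbound : ∀ u, f u ^ 2 ≤ K * q u)
    {u₀ : V} (hfu₀ : f u₀ = K) (hqu₀ : q u₀ ≤ K) :
    sSup {r | ∃ u, q u ≤ 1 ∧ r = f u} ^ 2 = K := by
  have hgreatest : IsGreatest {r | ∃ u, q u ≤ 1 ∧ r = f u} √K := by
    refine ⟨⟨(√K)⁻¹ • u₀, ?_, ?_⟩, ?_⟩
    · rw [hq, inv_pow, Real.sq_sqrt hK]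
      exact (mul_le_mul_of_nonneg_left hqu₀ (inv_nonneg.2 hK)).trans
        (inv_mul_le_one_of_le₀ le_rfl hK)
    · rw [hf, hfu₀, inv_mul_eq_div, Real.div_sqrt]
    · rintro r ⟨u, hu, rfl⟩
      exact Real.le_sqrt_of_sq_le ((hbound u).trans (mul_le_of_le_one_right hK hu))
  rw [hgreatest.csSup_eq, Real.sq_sqrt hK]

section WeightedVariance

variable {ι : Type*} [Fintype ι]

/-- `D_L⁻¹ - ℓ ℓᵀ / ∑ᵢ ℓᵢ`, where `ℓᵢ = 1 / Lᵢ`. -/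
noncomputable def invDiagSubRankOne [DecidableEq ι] (L : ι → ℝ) : Matrix ι ι ℝ :=
  Matrix.of fun i j => (if i = j then 1 / L i else 0) - 1 / (L i * L j) / ∑ k, 1 / L k

theorem sum_sum_mul_invDiagSubRankOne_mul [DecidableEq ι] (L u : ι → ℝ) :
    ∑ i, ∑ j, u i * invDiagSubRankOne L i j * u j
      = ∑ i, u i ^ 2 / L i - (∑ i, u i / L i) ^ 2 / ∑ i, 1 / L i := by
  have hentry : ∀ i j, u i * invDiagSubRankOne L i j * u j
      = (if i = j then u j ^ 2 / L j else 0) - u i / L i * (u j / L j) / ∑ k, 1 / L k := by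
    intro i j
    split_ifs with h
    · subst h; rw [invDiagSubRankOne, Matrix.of_apply, if_pos rfl]; ring
    · simp only [invDiagSubRankOne, Matrix.of_apply, if_neg h]; ring
  simp only [hentry, sum_sub_distrib, sum_ite_eq, mem_univ, if_true, ← sum_div, sq,
    sum_mul_sum]

theorem sum_sub_mean_sq_div {L : ι → ℝ} (hs : ∑ i, 1 / L i ≠ 0) (u : ι → ℝ) :
    ∑ i, (u i - (∑ j, u j / L j) / ∑ j, 1 / L j) ^ 2 / L i
      = ∑ i, u i ^ 2 / L i - (∑ i, u i / L i) ^ 2 / ∑ i, 1 / L i := by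
  set m := (∑ j, u j / L j) / ∑ j, 1 / L j
  have hexpand : ∀ i,
      (u i - m) ^ 2 / L i = u i ^ 2 / L i - 2 * m * (u i / L i) + m ^ 2 * (1 / L i) :=
    fun i => by ring
  simp only [hexpand, sum_add_distrib, sum_sub_distrib, ← mul_sum, m]
  field_simp
  ring

theorem sq_sum_mul_le_sum_mul_sq_mul_sum_sq_div {L : ι → ℝ} (hL : ∀ i, 0 < L i)
    (x v : ι → ℝ) :
    (∑ i, x i * v i) ^ 2 ≤ (∑ i, L i * x i ^ 2) * ∑ i, v i ^ 2 / L i := by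
  refine sum_sq_le_sum_mul_sum_of_sq_le_mul _ (fun i _ => by have := hL i; positivity)
    (fun i _ => by have := hL i; positivity) (fun i _ => le_of_eq ?_)
  have := (hL i).ne'
  field_simp

theorem sq_sum_mul_le_of_sum_eq_zero [Nonempty ι] {L : ι → ℝ} (hL : ∀ i, 0 < L i)
    {x : ι → ℝ} (hx : ∑ i, x i = 0) (u : ι → ℝ) :
    (∑ i, x i * u i) ^ 2
      ≤ (∑ i, L i * x i ^ 2) * (∑ i, u i ^ 2 / L i - (∑ i, u i / L i) ^ 2 / ∑ i, 1 / L i) := by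
  have hs : 0 < ∑ i, 1 / L i := sum_pos (fun i _ => one_div_pos.2 (hL i)) univ_nonempty
  set m := (∑ j, u j / L j) / ∑ j, 1 / L j
  have hcenter : ∑ i, x i * u i = ∑ i, x i * (u i - m) := by
    simp only [mul_sub, sum_sub_distrib, ← sum_mul, hx, zero_mul, sub_zero]
  rw [hcenter, ← sum_sub_mean_sq_div hs.ne']
  exact sq_sum_mul_le_sum_mul_sq_mul_sum_sq_div hL x _

theorem sq_sSup_smul_invDiagSubRankOne [DecidableEq ι] [Nonempty ι] {L : ι → ℝ}
    (hL : ∀ i, 0 < L i) {c : ℝ} (hc : 0 < c) {x : ι → ℝ} (hx : ∑ i, x i = 0) :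
    sSup {r | ∃ u : ι → ℝ,
        ∑ i, ∑ j, u i * (c • invDiagSubRankOne L) i j * u j ≤ 1 ∧ r = ∑ i, x i * u i} ^ 2
      = c⁻¹ * ∑ i, L i * x i ^ 2 := by
  have hquad : ∀ u : ι → ℝ, ∑ i, ∑ j, u i * (c • invDiagSubRankOne L) i j * u j
      = c * (∑ i, u i ^ 2 / L i - (∑ i, u i / L i) ^ 2 / ∑ i, 1 / L i) := by
    intro u
    simp only [Matrix.smul_apply, smul_eq_mul, ← sum_sum_mul_invDiagSubRankOne_mul, mul_sum]
    exact sum_congr rfl fun i _ => sum_congr rfl fun j _ => by ring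
  refine sq_sSup_eq_of_sq_le_mul (u₀ := fun i => c⁻¹ * (L i * x i)) ?_ ?_ ?_ ?_ ?_ ?_
  · intro a u
    simp only [Pi.smul_apply, smul_eq_mul, mul_sum, mul_left_comm]
  · intro a u
    simp only [hquad, Pi.smul_apply, smul_eq_mul, mul_pow, mul_div_assoc, ← mul_sum]
    ring
  · exact mul_nonneg (inv_nonneg.2 hc.le)
      (sum_nonneg fun i _ => mul_nonneg (hL i).le (sq_nonneg _))
  · intro u
    rw [hquad, mul_mul_mul_comm, inv_mul_cancel₀ hc.ne', one_mul]
    exact sq_sum_mul_le_of_sum_eq_zero hL hx u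
  · simp only [mul_sum]
    exact sum_congr rfl fun i _ => by ring
  · refine le_of_eq ?_
    have hLx : ∀ i, c⁻¹ * (L i * x i) / L i = c⁻¹ * x i := fun i => by
      have := (hL i).ne'; field_simp
    have hLx2 : ∀ i, (c⁻¹ * (L i * x i)) ^ 2 / L i = c⁻¹ ^ 2 * (L i * x i ^ 2) := fun i => by
      have := (hL i).ne'; field_simp
    rw [hquad]
    simp only [hLx, hLx2, ← mul_sum, hx, mul_zero, zero_pow two_ne_zero, zero_div, sub_zero]
    field_simp

end WeightedVariance

theorem stmt_14_general (N τ : ℕ) (hN : 2 ≤ N) (hτ1 : 2 ≤ τ)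
    (L : Fin N → ℝ) (hL : ∀ i, 0 < L i)
    (G : Matrix (Fin N) (Fin N) ℝ)
    (hG : G = (((τ : ℝ) - 1) / ((N : ℝ) - 1)) • Matrix.of (fun i j : Fin N =>
      (if i = j then 1 / L i else 0) - (1 / (L i * L j)) / (∑ k, 1 / L k)))
    (x : Fin N → ℝ) (hx : ∑ i, x i = 0) :
    (sSup {r : ℝ | ∃ u : Fin N → ℝ,
        (∑ i, ∑ j, u i * G i j * u j) ≤ 1 ∧ r = ∑ i, x i * u i}) ^ 2
      = (((N : ℝ) - 1) / ((τ : ℝ) - 1)) * ∑ i, L i * (x i) ^ 2 := by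
  have : Nonempty (Fin N) := ⟨⟨0, by omega⟩⟩
  have hc : 0 < ((τ : ℝ) - 1) / ((N : ℝ) - 1) := by
    have hN' : (2 : ℝ) ≤ N := by exact_mod_cast hN
    have hτ' : (2 : ℝ) ≤ τ := by exact_mod_cast hτ1
    exact div_pos (by linarith) (by linarith)
  subst hG
  rw [← inv_div ((τ : ℝ) - 1)]
  exact sq_sSup_smul_invDiagSubRankOne hL hc hx

/-- For `G = ((τ−1)/(N−1)) (D_L⁻¹ − (1/∑_i 1/L_i) ℓℓᵀ)`, the
squared dual norm on `S` is `((N−1)/(τ−1)) ∑_i L_i x_i²`. -/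
theorem stmt_14 (N τ : ℕ) (hN : 2 ≤ N) (hτ1 : 2 ≤ τ) (hτ2 : τ ≤ N)
    (L : Fin N → ℝ) (hL : ∀ i, 0 < L i)
    (G : Matrix (Fin N) (Fin N) ℝ)
    (hG : G = (((τ : ℝ) - 1) / ((N : ℝ) - 1)) • Matrix.of (fun i j : Fin N =>
      (if i = j then 1 / L i else 0) - (1 / (L i * L j)) / (∑ k, 1 / L k)))
    (x : Fin N → ℝ) (hx : ∑ i, x i = 0) :
    (sSup {r : ℝ | ∃ u : Fin N → ℝ,
        (∑ i, ∑ j, u i * G i j * u j) ≤ 1 ∧ r = ∑ i, x i * u i}) ^ 2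
      = (((N : ℝ) - 1) / ((τ : ℝ) - 1)) * ∑ i, L i * (x i) ^ 2 :=
  stmt_14_general N τ hN hτ1 L hL G hG x hx
end

section
/- Let N ≥ 2, 2 ≤ τ ≤ N, and L_1, …, L_N > 0, and let G = ((τ−1)/(N−1)) · ( D_L^{-1} − (1/(Σ_{i=1}^N 1/L_i)) · ℓ ℓᵀ ), where D_L is the diagonal matrix with diagonal entries L_1, …, L_N and ℓ_i = 1/L_i. Let f : ℝ^N → ℝ be convex and differentiable and attain its minimum value f* over S. Let R_1, …, R_N > 0 be such that for every x ∈ S with f(x) ≤ f(x⁰) there exists a minimizer x* of f over S with |x_i − x_i*| ≤ R_i for all i. Let (Ω, 𝓕, μ) be a probability space with a filtration (𝓕_k)_{k≥0}, x⁰ ∈ S, and (X_k)_{k≥0} an adapted sequence of ℝ^N-valued random variables with X_0 = x⁰ almost surely, each f(X_k) integrable, and, almost surely for every k: X_k ∈ S, f(X_{k+1}) ≤ f(X_k), and E[f(X_{k+1}) | 𝓕_k] ≤ f(X_k) − (1/2) ∇f(X_k)ᵀ G ∇f(X_k). Then for every k ≥ 1, E[f(X_k)] − f* ≤ ((N−1)/(τ−1))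 · (2 Σ_{i=1}^N L_i R_i²) / k. -/
open MeasureTheory

open ProbabilityTheory Finset Set

theorem ConvexOn.fderiv_apply_sub_le {E : Type*} [NormedAddCommGroup E] [NormedSpace ℝ E]
    {f : E → ℝ} (hf : ConvexOn ℝ univ f) {x : E} (hx : DifferentiableAt ℝ f x) (y : E) :
    fderiv ℝ f x (y - x) ≤ f y - f x := by
  have hline : HasDerivAt (f ∘ AffineMap.lineMap x y) (fderiv ℝ f x (y - x)) (0 : ℝ) := by
    refine HasFDerivAt.comp_hasDerivAt (0 : ℝ) ?_ AffineMap.hasDerivAt_lineMap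
    simpa using hx.hasFDerivAt
  simpa [slope_def_field] using (hf.comp_affineMap (AffineMap.lineMap x y)).le_slope_of_hasDerivAt
    (mem_univ 0) (mem_univ 1) one_pos hline

theorem fderiv_apply_eq_sum_gradVec {N : ℕ} (f : (Fin N → ℝ) → ℝ) (x v : Fin N → ℝ) :
    fderiv ℝ f x v = ∑ i, gradVec N f x i * v i := by
  rw [← ContinuousLinearMap.coe_coe, (fderiv ℝ f x : (Fin N → ℝ) →ₗ[ℝ] ℝ).pi_apply_eq_sum_univ v]
  refine sum_congr rfl fun i _ => ?_
  have hsingle : (fun j => if i = j then (1 : ℝ) else 0) = Pi.single i 1 := by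
    ext j
    simp [Pi.single_apply, eq_comm]
  rw [hsingle, smul_eq_mul, mul_comm, gradVec, ContinuousLinearMap.coe_coe]

section DualNorm

variable {ι : Type*} [Fintype ι] {L : ι → ℝ}

variable (L) in
/-- The squared dual norm of `g` on `{h | ∑ i, h i = 0}` for the norm `h ↦ √(∑ i, L i * h i ^ 2)`;
it is the quadratic form of `((N - 1) / (τ - 1)) G = D_L⁻¹ - (∑ i, 1 / L i)⁻¹ ℓ ℓᵀ`. -/
noncomputable def dualNormSq (g : ι → ℝ) : ℝ :=
  ∑ i, g i ^ 2 / L i - (∑ i, g i / L i) ^ 2 / ∑ i, 1 / L i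

theorem dualNormSq_eq_sum_sq (hL : ∀ i, 0 < L i) (g : ι → ℝ) :
    dualNormSq L g = ∑ i, (g i - (∑ j, g j / L j) / ∑ j, 1 / L j) ^ 2 / L i := by
  rcases isEmpty_or_nonempty ι with hι | hι
  · simp [dualNormSq]
  rw [dualNormSq]
  set σ := ∑ j, 1 / L j with hσdef
  set m := (∑ j, g j / L j) / σ
  have hσ : 0 < σ := sum_pos (fun i _ => one_div_pos.2 (hL i)) univ_nonempty
  have hmean : ∑ j, g j / L j = m * σ := (div_mul_cancel₀ _ hσ.ne').symm
  have hexpand : ∀ i,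
      (g i - m) ^ 2 / L i = g i ^ 2 / L i - 2 * m * (g i / L i) + m ^ 2 * (1 / L i) :=
    fun i => by ring
  clear_value m σ
  simp only [hexpand, sum_add_distrib, sum_sub_distrib, ← mul_sum, hmean, ← hσdef]
  field_simp
  ring

theorem dualNormSq_nonneg (hL : ∀ i, 0 < L i) (g : ι → ℝ) : 0 ≤ dualNormSq L g := by
  rw [dualNormSq_eq_sum_sq hL]
  exact sum_nonneg fun i _ => div_nonneg (sq_nonneg _) (hL i).le

theorem sq_sum_mul_le_dualNormSq_mul (hL : ∀ i, 0 < L i) (g : ι → ℝ) {h : ι → ℝ}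
    (hh : ∑ i, h i = 0) :
    (∑ i, g i * h i) ^ 2 ≤ dualNormSq L g * ∑ i, L i * h i ^ 2 := by
  set m := (∑ j, g j / L j) / ∑ j, 1 / L j
  have hshift : ∑ i, g i * h i = ∑ i, (g i - m) * h i := by
    simp only [sub_mul, sum_sub_distrib, ← mul_sum, hh, mul_zero, sub_zero]
  rw [hshift, dualNormSq_eq_sum_sq hL]
  refine sum_sq_le_sum_mul_sum_of_sq_le_mul _ (fun i _ => div_nonneg (sq_nonneg _) (hL i).le)
    (fun i _ => mul_nonneg (hL i).le (sq_nonneg _)) fun i _ => le_of_eq ?_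
  field_simp [(hL i).ne']
  ring

theorem sum_mul_smul_matrix_mul_eq_dualNormSq [DecidableEq ι] (α : ℝ) (g : ι → ℝ) :
    ∑ i, ∑ j, g i * (α • Matrix.of (fun i j : ι =>
      (if i = j then 1 / L i else 0) - (1 / (L i * L j)) / (∑ k, 1 / L k))) i j * g j
      = α * dualNormSq L g := by
  have hrow : ∀ i, ∑ j, g i * (α • Matrix.of (fun i j : ι =>
      (if i = j then 1 / L i else 0) - (1 / (L i * L j)) / (∑ k, 1 / L k))) i j * g j
      = α * (g i ^ 2 / L i - g i / L i * (∑ j, g j / L j) / ∑ k, 1 / L k) := by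
    intro i
    simp only [Matrix.smul_apply, Matrix.of_apply, smul_eq_mul, mul_sub, sub_mul, sum_sub_distrib,
      mul_ite, ite_mul, mul_zero, zero_mul, sum_ite_eq]
    rw [if_pos (Finset.mem_univ i), mul_sum, sum_div, mul_sum]
    congr 1
    · ring
    · refine sum_congr rfl fun j _ => ?_
      field_simp
  rw [sum_congr rfl fun i _ => hrow i, ← mul_sum, dualNormSq, sum_sub_distrib, ← sum_div, ← sum_mul,
    sq]

end DualNorm

theorem sub_sq_le_dualNormSq_mul {N : ℕ} {f : (Fin N → ℝ) → ℝ} (hf : ConvexOn ℝ univ f)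
    {x xs : Fin N → ℝ} (hx : DifferentiableAt ℝ f x) (hsum : ∑ i, x i = ∑ i, xs i)
    (hle : f xs ≤ f x) {L R : Fin N → ℝ} (hL : ∀ i, 0 < L i) (hR : ∀ i, |x i - xs i| ≤ R i) :
    (f x - f xs) ^ 2 ≤ dualNormSq L (gradVec N f x) * ∑ i, L i * R i ^ 2 := by
  have hgrad : f x - f xs ≤ ∑ i, gradVec N f x i * (x - xs) i := by
    have := hf.fderiv_apply_sub_le hx xs
    rw [← neg_sub x xs, map_neg, fderiv_apply_eq_sum_gradVec] at this
    linarith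
  have hdist : ∑ i, L i * (x - xs) i ^ 2 ≤ ∑ i, L i * R i ^ 2 :=
    sum_le_sum fun i _ => mul_le_mul_of_nonneg_left (sq_le_sq' (abs_le.1 (hR i)).1
      (abs_le.1 (hR i)).2) (hL i).le
  calc (f x - f xs) ^ 2 ≤ (∑ i, gradVec N f x i * (x - xs) i) ^ 2 :=
        pow_le_pow_left₀ (sub_nonneg.2 hle) hgrad 2
    _ ≤ dualNormSq L (gradVec N f x) * ∑ i, L i * (x - xs) i ^ 2 :=
        sq_sum_mul_le_dualNormSq_mul hL _ (by simp [sum_sub_distrib, hsum])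
    _ ≤ dualNormSq L (gradVec N f x) * ∑ i, L i * R i ^ 2 :=
        mul_le_mul_of_nonneg_left hdist (dualNormSq_nonneg hL _)

theorem le_one_div_mul_of_le_sub_mul_sq {a : ℕ → ℝ} {c : ℝ} (hc : 0 < c)
    (ha : ∀ k, a (k + 1) ≤ a k - c * a k ^ 2) {k : ℕ} (hk : 1 ≤ k) : a k ≤ 1 / (c * k) := by
  have hinv : ∀ k, 0 < a k → c * k ≤ 1 / a k := by
    intro k
    induction k with
    | zero => intro h; simpa using h.le
    | succ n ih =>
      intro hpos
      have hprev : 0 < a n := hpos.trans_le ((ha n).trans (by nlinarith))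
      -- `(1 + c a n) a (n + 1) ≤ (1 + c a n) (a n - c (a n)²) = a n - c² (a n)³ ≤ a n`
      have hstep : 1 / a n + c ≤ 1 / a (n + 1) := by
        rw [div_add' _ _ _ hprev.ne', div_le_div_iff₀ hprev hpos]
        nlinarith [mul_le_mul_of_nonneg_left (ha n) (by positivity : (0 : ℝ) ≤ 1 + c * a n),
          mul_pos (pow_pos hc 2) (pow_pos hprev 3)]
      push_cast
      linarith [ih hprev]
  rcases le_or_gt (a k) 0 with hneg | hpos
  · exact hneg.trans (by positivity)
  · rw [le_div_iff₀ (by positivity)]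
    simpa [hpos.ne'] using mul_le_mul_of_nonneg_left (hinv k hpos) hpos.le

theorem ae_le_of_ae_succ_le {Ω β : Type*} [Preorder β] {mΩ : MeasurableSpace Ω}
    {μ : Measure Ω} {u : ℕ → Ω → β} {b : β} (h0 : ∀ᵐ ω ∂μ, u 0 ω ≤ b)
    (hsucc : ∀ k, ∀ᵐ ω ∂μ, u (k + 1) ω ≤ u k ω) (k : ℕ) : ∀ᵐ ω ∂μ, u k ω ≤ b := by
  induction k with
  | zero => exact h0
  | succ k ih => filter_upwards [hsucc k, ih] with ω h₁ h₂ using h₁.trans h₂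

theorem integral_sub_le_sub_mul_sq_of_condExp_le {Ω : Type*} {m mΩ : MeasurableSpace Ω}
    {μ : Measure Ω} [IsProbabilityMeasure μ] (hm : m ≤ mΩ) {Y Z : Ω → ℝ} {c s : ℝ} (hc : 0 ≤ c)
    (hZ : MemLp Z 2 μ) (h : ∀ᵐ ω ∂μ, μ[Y | m] ω ≤ Z ω - c * (Z ω - s) ^ 2) :
    ∫ ω, Y ω ∂μ - s ≤ (∫ ω, Z ω ∂μ - s) - c * (∫ ω, Z ω ∂μ - s) ^ 2 := by
  have hW : MemLp (fun ω => Z ω - s) 2 μ := hZ.sub (memLp_const s)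
  have hWsq : Integrable (fun ω => (Z ω - s) ^ 2) μ := hW.integrable_sq
  have hmean : ∫ ω, (Z ω - s) ∂μ = ∫ ω, Z ω ∂μ - s := by
    rw [integral_sub (hZ.integrable one_le_two) (integrable_const s)]
    simp
  have hjensen : (∫ ω, Z ω ∂μ - s) ^ 2 ≤ ∫ ω, (Z ω - s) ^ 2 ∂μ := by
    have := variance_nonneg (fun ω => Z ω - s) μ
    rw [variance_eq_sub hW, hmean] at this
    simp only [Pi.pow_apply] at this
    linarith
  have hrhs : Integrable (fun ω => Z ω - c * (Z ω - s) ^ 2) μ :=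
    (hZ.integrable one_le_two).sub (hWsq.const_mul c)
  have hint := integral_mono_ae integrable_condExp hrhs h
  rw [integral_condExp hm, integral_sub (hZ.integrable one_le_two) (hWsq.const_mul c),
    integral_const_mul] at hint
  nlinarith

theorem stmt_15_general (N τ : ℕ) (hN : 2 ≤ N) (hτ1 : 2 ≤ τ)
    (L : Fin N → ℝ) (hL : ∀ i, 0 < L i)
    (G : Matrix (Fin N) (Fin N) ℝ)
    (hG : G = (((τ : ℝ) - 1) / ((N : ℝ) - 1)) • Matrix.of (fun i j : Fin N =>
      (if i = j then 1 / L i else 0) - (1 / (L i * L j)) / (∑ k, 1 / L k)))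
    (f : (Fin N → ℝ) → ℝ) (hconv : ConvexOn ℝ Set.univ f)
    (hdiff : Differentiable ℝ f)
    (fstar : ℝ)
    (hattain : ∃ xs : Fin N → ℝ, (∑ i, xs i = 0) ∧ f xs = fstar ∧
      ∀ x : Fin N → ℝ, (∑ i, x i = 0) → fstar ≤ f x)
    (x0 : Fin N → ℝ)
    (R : Fin N → ℝ) (hR : ∀ i, 0 < R i)
    (hRad : ∀ x : Fin N → ℝ, (∑ i, x i = 0) → f x ≤ f x0 →
      ∃ xs : Fin N → ℝ, (∑ i, xs i = 0) ∧ f xs = fstar ∧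
        ∀ i, |x i - xs i| ≤ R i)
    {Ω : Type} [MeasurableSpace Ω] (μ : Measure Ω) [IsProbabilityMeasure μ]
    (𝓕 : Filtration ℕ ‹MeasurableSpace Ω›)
    (X : ℕ → Ω → (Fin N → ℝ))
    (hX0 : ∀ᵐ ω ∂μ, X 0 ω = x0)
    (hint : ∀ k, Integrable (fun ω => f (X k ω)) μ)
    (hfeas : ∀ k, ∀ᵐ ω ∂μ, ∑ i, X k ω i = 0)
    (hdec : ∀ k, ∀ᵐ ω ∂μ, f (X (k + 1) ω) ≤ f (X k ω))
    (hexp : ∀ k, ∀ᵐ ω ∂μ,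
      (μ[(fun ω' => f (X (k + 1) ω')) | 𝓕 k]) ω ≤ f (X k ω) -
        (1 / 2) * ∑ i, ∑ j,
          gradVec N f (X k ω) i * G i j * gradVec N f (X k ω) j) :
    ∀ k : ℕ, 1 ≤ k → (∫ ω, f (X k ω) ∂μ) - fstar ≤
      (((N : ℝ) - 1) / ((τ : ℝ) - 1)) * (2 * ∑ i, L i * (R i) ^ 2) / k := by
  obtain ⟨-, -, -, hmin⟩ := hattain
  have hτ' : (2 : ℝ) ≤ τ := by exact_mod_cast hτ1
  have hN' : (2 : ℝ) ≤ N := by exact_mod_cast hN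
  set α := ((τ : ℝ) - 1) / ((N : ℝ) - 1)
  set ρ := ∑ i, L i * R i ^ 2
  have hα : 0 < α := div_pos (by linarith) (by linarith)
  have hρ : 0 < ρ := sum_pos (fun i _ => mul_pos (hL i) (pow_pos (hR i) 2))
    ⟨⟨0, by omega⟩, Finset.mem_univ _⟩
  have hbelow : ∀ k, ∀ᵐ ω ∂μ, fstar ≤ f (X k ω) := fun k =>
    (hfeas k).mono fun ω hS => hmin _ hS
  have habove : ∀ k, ∀ᵐ ω ∂μ, f (X k ω) ≤ f x0 :=
    ae_le_of_ae_succ_le (u := fun k ω => f (X k ω)) (hX0.mono fun ω h => h ▸ le_rfl) hdec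
  have hstep : ∀ k, ∀ᵐ ω ∂μ, μ[(fun ω' => f (X (k + 1) ω')) | 𝓕 k] ω ≤
      f (X k ω) - α / (2 * ρ) * (f (X k ω) - fstar) ^ 2 := by
    intro k
    filter_upwards [hexp k, hfeas k, habove k] with ω hω hS hle
    obtain ⟨xs, hxsS, rfl, hxsR⟩ := hRad _ hS hle
    have hsq := sub_sq_le_dualNormSq_mul hconv (hdiff _) (hS.trans hxsS.symm) (hmin _ hS) hL hxsR
    rw [hG, sum_mul_smul_matrix_mul_eq_dualNormSq] at hω
    have : α / (2 * ρ) * (f (X k ω) - f xs) ^ 2 ≤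
        1 / 2 * (α * dualNormSq L (gradVec N f (X k ω))) := by
      rw [div_mul_eq_mul_div, div_le_iff₀ (by positivity)]
      nlinarith
    linarith
  have hrec : ∀ k, ∫ ω, f (X (k + 1) ω) ∂μ - fstar ≤
      (∫ ω, f (X k ω) ∂μ - fstar) - α / (2 * ρ) * (∫ ω, f (X k ω) ∂μ - fstar) ^ 2 := fun k =>
    integral_sub_le_sub_mul_sq_of_condExp_le (𝓕.le k) (by positivity)
      (memLp_of_bounded ((hbelow k).and (habove k)) (hint k).1 2) (hstep k)
  intro k hk
  calc ∫ ω, f (X k ω) ∂μ - fstar ≤ 1 / (α / (2 * ρ) * k) :=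
        le_one_div_mul_of_le_sub_mul_sq (a := fun k => ∫ ω, f (X k ω) ∂μ - fstar)
          (by positivity) hrec hk
    _ = (((N : ℝ) - 1) / ((τ : ℝ) - 1)) * (2 * ρ) / k := by
        have hτ : (τ : ℝ) - 1 ≠ 0 := by linarith
        simp only [α]
        field_simp

/-- Sublinear rate
`E[f(X_k)] − f* ≤ ((N−1)/(τ−1)) · 2 ∑_i L_i R_i² / k` for the random descent
scheme with the matrix `G = ((τ−1)/(N−1)) (D_L⁻¹ − (1/∑_i 1/L_i) ℓℓᵀ)`. -/
theorem stmt_15 (N τ : ℕ) (hN : 2 ≤ N) (hτ1 : 2 ≤ τ) (hτ2 : τ ≤ N)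
    (L : Fin N → ℝ) (hL : ∀ i, 0 < L i)
    (G : Matrix (Fin N) (Fin N) ℝ)
    (hG : G = (((τ : ℝ) - 1) / ((N : ℝ) - 1)) • Matrix.of (fun i j : Fin N =>
      (if i = j then 1 / L i else 0) - (1 / (L i * L j)) / (∑ k, 1 / L k)))
    (f : (Fin N → ℝ) → ℝ) (hconv : ConvexOn ℝ Set.univ f)
    (hdiff : Differentiable ℝ f)
    (fstar : ℝ)
    (hattain : ∃ xs : Fin N → ℝ, (∑ i, xs i = 0) ∧ f xs = fstar ∧
      ∀ x : Fin N → ℝ, (∑ i, x i = 0) → fstar ≤ f x)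
    (x0 : Fin N → ℝ) (hx0 : ∑ i, x0 i = 0)
    (R : Fin N → ℝ) (hR : ∀ i, 0 < R i)
    (hRad : ∀ x : Fin N → ℝ, (∑ i, x i = 0) → f x ≤ f x0 →
      ∃ xs : Fin N → ℝ, (∑ i, xs i = 0) ∧ f xs = fstar ∧
        ∀ i, |x i - xs i| ≤ R i)
    {Ω : Type} [MeasurableSpace Ω] (μ : Measure Ω) [IsProbabilityMeasure μ]
    (𝓕 : Filtration ℕ ‹MeasurableSpace Ω›)
    (X : ℕ → Ω → (Fin N → ℝ)) (hadapt : Adapted 𝓕 X)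
    (hX0 : ∀ᵐ ω ∂μ, X 0 ω = x0)
    (hint : ∀ k, Integrable (fun ω => f (X k ω)) μ)
    (hfeas : ∀ k, ∀ᵐ ω ∂μ, ∑ i, X k ω i = 0)
    (hdec : ∀ k, ∀ᵐ ω ∂μ, f (X (k + 1) ω) ≤ f (X k ω))
    (hexp : ∀ k, ∀ᵐ ω ∂μ,
      (μ[(fun ω' => f (X (k + 1) ω')) | 𝓕 k]) ω ≤ f (X k ω) -
        (1 / 2) * ∑ i, ∑ j,
          gradVec N f (X k ω) i * G i j * gradVec N f (X k ω) j) :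
    ∀ k : ℕ, 1 ≤ k → (∫ ω, f (X k ω) ∂μ) - fstar ≤
      (((N : ℝ) - 1) / ((τ : ℝ) - 1)) * (2 * ∑ i, L i * (R i) ^ 2) / k :=
  stmt_15_general N τ hN hτ1 L hL G hG f hconv hdiff fstar hattain x0 R hR hRad μ 𝓕 X hX0 hint hfeas
    hdec hexp
end

section
/- Let n ≥ 1 and N ≥ 1, let Q_1, …, Q_N ⊆ ℝ^n be convex sets, let σ_1, …, σ_N > 0, and let g_i : ℝ^n → ℝ be σ_i-strongly convex for each i, i.e. g_i(t u + (1−t) w) ≤ t g_i(u) + (1−t) g_i(w) − (σ_i/2) t (1−t) ‖u − w‖² for all u, w ∈ ℝ^n and t ∈ [0,1]. Let v* ∈ ∩_{i=1}^N Q_i. For x_i ∈ ℝ^n, let u_i(x_i) ∈ Q_i be a minimizer of u ↦ g_i(u) − ⟨x_i, u⟩ over Q_i. Then for every x = (x_1, …, x_N) ∈ (ℝ^n)^N with Σ_{i=1}^N x_i = 0, (1/2) Σ_{i=1}^N σ_i ‖u_i(x_i) − v*‖² ≤ Σ_{i=1}^N g_i(v*) − Σ_{i=1}^N ( g_i(u_i(x_i))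 − ⟨x_i, u_i(x_i)⟩ ). -/
/-!
Each tilted objective `g i - ⟪x i, ·⟫` is `σ i`-strongly convex and minimized over `Q i` at `u i`,
so it grows quadratically away from `u i`; evaluating this growth at `vstar ∈ Q i` gives one
inequality per index. Summing them, the linear terms `⟪x i, vstar⟫` cancel because `∑ i, x i = 0`.
-/

open RealInnerProductSpace

section StrongConvexity

variable {E : Type*} [NormedAddCommGroup E] [NormedSpace ℝ E] {s : Set E} {m : ℝ} {f : E → ℝ}

lemma strongConvexOn_of_forall_le (hs : Convex ℝ s)
    (hf : ∀ u w : E, ∀ t : ℝ, 0 ≤ t → t ≤ 1 →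
      f (t • u + (1 - t) • w) ≤ t * f u + (1 - t) * f w - (m / 2) * t * (1 - t) * ‖u - w‖ ^ 2) :
    StrongConvexOn s m f := by
  refine ⟨hs, fun u _ w _ a b ha hb hab ↦ ?_⟩
  obtain rfl : b = 1 - a := eq_sub_of_add_eq' hab
  have h := hf u w a ha (by linarith)
  simp only [smul_eq_mul]
  linarith

lemma StrongConvexOn.sub_linearMap (hf : StrongConvexOn s m f) (ℓ : E →ₗ[ℝ] ℝ) :
    StrongConvexOn s m (f - ℓ) := by
  simpa only [StrongConvexOn, add_zero] using hf.sub (ℓ.concaveOn hf.1).uniformConcaveOn_zero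

lemma StrongConvexOn.add_sq_norm_sub_le_of_isMinOn (hf : StrongConvexOn s m f) {u v : E}
    (hu : u ∈ s) (hmin : IsMinOn f s u) (hv : v ∈ s) :
    f u + m / 2 * ‖u - v‖ ^ 2 ≤ f v := by
  -- Compare `u` with the points `t • v + (1 - t) • u` of the segment and let `t → 0`.
  have hseg : ∀ t ∈ Set.Ioc (0 : ℝ) 1, f u + (1 - t) * (m / 2 * ‖u - v‖ ^ 2) ≤ f v := by
    rintro t ⟨ht0, ht1⟩
    have hconv := hf.2 hv hu ht0.le (sub_nonneg.2 ht1) (add_sub_cancel t 1)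
    have hle := isMinOn_iff.1 hmin _ (hf.1 hv hu ht0.le (sub_nonneg.2 ht1) (add_sub_cancel t 1))
    rw [norm_sub_rev] at hconv
    simp only [smul_eq_mul] at hconv
    have hscaled : t * (f u + (1 - t) * (m / 2 * ‖u - v‖ ^ 2)) ≤ t * f v := by linarith
    exact le_of_mul_le_mul_left hscaled ht0
  have hclosed : IsClosed {t : ℝ | f u + (1 - t) * (m / 2 * ‖u - v‖ ^ 2) ≤ f v} :=
    isClosed_le (by fun_prop) continuous_const
  have h0 : (0 : ℝ) ∈ closure (Set.Ioc (0 : ℝ) 1) := by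
    rw [closure_Ioc zero_ne_one]
    exact ⟨le_rfl, zero_le_one⟩
  simpa using hclosed.closure_subset_iff.2 hseg h0

end StrongConvexity

theorem stmt_18_general (n N : ℕ)
    (Q : Fin N → Set (EuclideanSpace ℝ (Fin n))) (hQ : ∀ i, Convex ℝ (Q i))
    (σ : Fin N → ℝ)
    (g : Fin N → EuclideanSpace ℝ (Fin n) → ℝ)
    (hg : ∀ i, ∀ u w : EuclideanSpace ℝ (Fin n), ∀ t : ℝ, 0 ≤ t → t ≤ 1 →
      g i (t • u + (1 - t) • w) ≤
        t * g i u + (1 - t) * g i w - (σ i / 2) * t * (1 - t) * ‖u - w‖ ^ 2)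
    (vstar : EuclideanSpace ℝ (Fin n)) (hv : ∀ i, vstar ∈ Q i)
    (x : Fin N → EuclideanSpace ℝ (Fin n)) (hx : ∑ i, x i = 0)
    (u : Fin N → EuclideanSpace ℝ (Fin n))
    (hu : ∀ i, u i ∈ Q i ∧
      ∀ w ∈ Q i, g i (u i) - ⟪x i, u i⟫ ≤ g i w - ⟪x i, w⟫) :
    (1 / 2) * ∑ i, σ i * ‖u i - vstar‖ ^ 2 ≤
      (∑ i, g i vstar) - ∑ i, (g i (u i) - ⟪x i, u i⟫) := by
  have hgrowth : ∀ i, (g i (u i) - ⟪x i, u i⟫) + σ i / 2 * ‖u i - vstar‖ ^ 2 ≤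
      g i vstar - ⟪x i, vstar⟫ := fun i ↦
    ((strongConvexOn_of_forall_le (hQ i) (hg i)).sub_linearMap (innerₛₗ ℝ (x i))
      ).add_sq_norm_sub_le_of_isMinOn (hu i).1 (hu i).2 (hv i)
  have hcancel : ∑ i, (g i vstar - ⟪x i, vstar⟫) = ∑ i, g i vstar := by
    rw [Finset.sum_sub_distrib, ← sum_inner, hx, inner_zero_left, sub_zero]
  have hsum := Finset.sum_le_sum fun i (_ : i ∈ Finset.univ) ↦ hgrowth i
  rw [Finset.sum_add_distrib, hcancel] at hsum
  have hhalf : (1 / 2) * ∑ i, σ i * ‖u i - vstar‖ ^ 2 = ∑ i, σ i / 2 * ‖u i - vstar‖ ^ 2 := by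
    rw [Finset.mul_sum]
    exact Finset.sum_congr rfl fun i _ ↦ by ring
  linarith

/-- Strong convexity of the primal objectives yields the bound
`(1/2) ∑_i σ_i ‖u_i(x_i) − v*‖² ≤ ∑_i g_i(v*) − ∑_i (g_i(u_i(x_i)) − ⟨x_i, u_i(x_i)⟩)`
for every dual variable `x` with `∑_i x_i = 0`. -/
theorem stmt_18 (n N : ℕ) (hn : 1 ≤ n) (hN : 1 ≤ N)
    (Q : Fin N → Set (EuclideanSpace ℝ (Fin n))) (hQ : ∀ i, Convex ℝ (Q i))
    (σ : Fin N → ℝ) (hσ : ∀ i, 0 < σ i)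
    (g : Fin N → EuclideanSpace ℝ (Fin n) → ℝ)
    (hg : ∀ i, ∀ u w : EuclideanSpace ℝ (Fin n), ∀ t : ℝ, 0 ≤ t → t ≤ 1 →
      g i (t • u + (1 - t) • w) ≤
        t * g i u + (1 - t) * g i w - (σ i / 2) * t * (1 - t) * ‖u - w‖ ^ 2)
    (vstar : EuclideanSpace ℝ (Fin n)) (hv : ∀ i, vstar ∈ Q i)
    (x : Fin N → EuclideanSpace ℝ (Fin n)) (hx : ∑ i, x i = 0)
    (u : Fin N → EuclideanSpace ℝ (Fin n))
    (hu : ∀ i, u i ∈ Q i ∧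
      ∀ w ∈ Q i, g i (u i) - ⟪x i, u i⟫ ≤ g i w - ⟪x i, w⟫) :
    (1 / 2) * ∑ i, σ i * ‖u i - vstar‖ ^ 2 ≤
      (∑ i, g i vstar) - ∑ i, (g i (u i) - ⟪x i, u i⟫) :=
  stmt_18_general n N Q hQ σ g hg vstar hv x hx u hu
end

section
/- Let n ≥ 1, N ≥ 2, let Q_1, …, Q_N ⊆ ℝ^n be convex sets, let g_i : ℝ^n → ℝ, and let v* ∈ ∩_{i=1}^N Q_i. For x = (x_1, …, x_N) ∈ (ℝ^n)^N suppose u_i(x_i) ∈ Q_i attains the supremum f_i(x_i) := sup{⟨x_i, u⟩ − g_i(u) : u ∈ Q_i} (assumed finite), and set f(x) = Σ_{i=1}^N f_i(x_i) and v̂* = (v*, …, v*) ∈ (ℝ^n)^N. Let G be an N×N symmetric positive semidefinite matrix with G e = 0 such that uᵀGu = 0 implies u is a scalar multiple of e. Assume f is convex and differentiable with block gradient ∇_{x_i} f(x) = u_i(x_i) for all x, and let x* ∈ S_n be a minimizer of f over S_n with u_i(x_i*) = v* for every i. Then for every x ∈ S_n: −‖x*‖*_G · ‖u(x) − v̂*‖_G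 ≤ Σ_{i=1}^N g_i(u_i(x_i)) − Σ_{i=1}^N g_i(v*) ≤ ( ‖x − x*‖*_G + ‖x*‖*_G ) · ‖u(x) − v̂*‖_G, where u(x) = (u_1(x_1), …, u_N(x_N)). -/
/-!
By the Fenchel–Young equality `g_i(u_i(y)) = ⟨y, u_i(y)⟩ - f_i(y)`, the gap
`∑ g_i(u_i(x_i)) - ∑ g_i(v*)` equals `⟨x, u(x) - v̂*⟩ - (f(x) - f(x*))`, because `x` and `x*` have
zero block sum. Minimality of `x*` and the gradient inequality at `x` place `f(x) - f(x*)` between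
`0` and `⟨x - x*, u(x) - v̂*⟩`. Both pairings are then bounded through the dual norm: since
`ker G ⊆ ℝ e`, every `y ∈ S_n` is `G z` blockwise, so `⟨y, w⟩ = ⟨w, z⟩_G ≤ ‖w‖_G ‖z‖_G` by
Cauchy–Schwarz for the semidefinite form; this makes the supremum defining `‖y‖*_G` finite and
gives `⟨y, w⟩ ≤ ‖y‖*_G ‖w‖_G`.
-/

open RealInnerProductSpace

/-- The seminorm `‖w‖_G = √(∑_{i,j} G_{ij} ⟨w_i, w_j⟩)` on block vectors. -/
noncomputable def blockNormG (n N : ℕ) (G : Matrix (Fin N) (Fin N) ℝ)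
    (w : Fin N → EuclideanSpace ℝ (Fin n)) : ℝ :=
  Real.sqrt (∑ i, ∑ j, G i j * ⟪w i, w j⟫)

/-- The dual norm `‖x‖*_G = sup{∑_i ⟨x_i, w_i⟩ : ‖w‖_G ≤ 1}` on block
vectors with zero block sum. -/
noncomputable def blockDualNormG (n N : ℕ) (G : Matrix (Fin N) (Fin N) ℝ)
    (x : Fin N → EuclideanSpace ℝ (Fin n)) : ℝ :=
  sSup {r : ℝ | ∃ w : Fin N → EuclideanSpace ℝ (Fin n),
    blockNormG n N G w ≤ 1 ∧ r = ∑ i, ⟪x i, w i⟫}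

open Matrix

theorem ConvexOn.add_fderiv_sub_le {E : Type*} [NormedAddCommGroup E] [NormedSpace ℝ E]
    {s : Set E} {f : E → ℝ} {f' : E →L[ℝ] ℝ} {a b : E} (hf : ConvexOn ℝ s f)
    (ha : a ∈ s) (hb : b ∈ s) (hf' : HasFDerivAt f f' a) :
    f a + f' (b - a) ≤ f b := by
  have hline : ConvexOn ℝ (AffineMap.lineMap a b ⁻¹' s) (f ∘ AffineMap.lineMap a b) :=
    hf.comp_affineMap _
  have hderiv : HasDerivAt (f ∘ AffineMap.lineMap (k := ℝ) a b) (f' (b - a)) 0 := by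
    simpa using hf'.comp_hasDerivAt_of_eq (0 : ℝ) AffineMap.hasDerivAt_lineMap
      (AffineMap.lineMap_apply_zero a b).symm
  have hslope :=
    hline.le_slope_of_hasDerivAt (by simpa using ha) (by simpa using hb) zero_lt_one hderiv
  simp only [slope_def_field, Function.comp_apply, AffineMap.lineMap_apply_one,
    AffineMap.lineMap_apply_zero, sub_zero, div_one] at hslope
  linarith

section

variable {ι E : Type*} [Fintype ι] [NormedAddCommGroup E] [InnerProductSpace ℝ E]

theorem sum_inner_sub_const {y w : ι → E} (hy : ∑ i, y i = 0) (v : E) :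
    ∑ i, ⟪y i, w i - v⟫ = ∑ i, ⟪y i, w i⟫ := by
  simp_rw [inner_sub_right, Finset.sum_sub_distrib, ← sum_inner, hy, inner_zero_left, sub_zero]

variable (E) in
noncomputable def blockForm (G : Matrix ι ι ℝ) : LinearMap.BilinForm ℝ (ι → E) :=
  ∑ i, ∑ j, G i j • (innerₗ E).compl₁₂ (LinearMap.proj i) (LinearMap.proj j)

@[simp]
theorem blockForm_apply (G : Matrix ι ι ℝ) (w z : ι → E) :
    blockForm E G w z = ∑ i, ∑ j, G i j * ⟪w i, z j⟫ := by
  simp [blockForm]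

theorem blockForm_comm {G : Matrix ι ι ℝ} (hG : G.IsSymm) (w z : ι → E) :
    blockForm E G w z = blockForm E G z w := by
  simp only [blockForm_apply]
  rw [Finset.sum_comm]
  refine Finset.sum_congr rfl fun i _ => Finset.sum_congr rfl fun j _ => ?_
  rw [hG.apply i j, real_inner_comm]

theorem blockForm_self_nonneg {G : Matrix ι ι ℝ} (hG : G.PosSemidef) (w : ι → E) :
    0 ≤ blockForm E G w w := by
  obtain ⟨m, v, rfl⟩ := posSemidef_iff_eq_sum_vecMulVec.mp hG
  have : blockForm E (∑ k, vecMulVec (v k) (star (v k))) w w =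
      ∑ k, ‖∑ i, v k i • w i‖ ^ 2 := by
    simp_rw [blockForm_apply, ← real_inner_self_eq_norm_sq, sum_inner, inner_sum,
      real_inner_smul_left, real_inner_smul_right, Matrix.sum_apply, vecMulVec_apply,
      Finset.sum_mul, Pi.star_apply, star_trivial]
    rw [Finset.sum_comm_cycle]
    simp only [mul_assoc]
  rw [this]
  positivity

theorem blockForm_le_sqrt_mul_sqrt {G : Matrix ι ι ℝ} (hG : G.PosSemidef) (w z : ι → E) :
    blockForm E G w z ≤ √(blockForm E G w w) * √(blockForm E G z z) := by
  have hCS := (blockForm E G).apply_mul_apply_le_of_forall_zero_le (blockForm_self_nonneg hG) w z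
  rw [blockForm_comm (isHermitian_iff_isSymm.mp hG.1) z w, ← sq] at hCS
  rw [← Real.sqrt_mul (blockForm_self_nonneg hG w)]
  exact (le_abs_self _).trans (Real.abs_le_sqrt hCS)

theorem sum_inner_eq_blockForm {G : Matrix ι ι ℝ} {y z : ι → E}
    (hyz : ∀ i, y i = ∑ j, G i j • z j) (w : ι → E) :
    ∑ i, ⟪y i, w i⟫ = blockForm E G w z := by
  simp_rw [blockForm_apply, hyz, sum_inner, real_inner_smul_left, real_inner_comm (w _)]

theorem Matrix.exists_mulVec_eq_of_sum_eq_zero [DecidableEq ι] {G : Matrix ι ι ℝ}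
    (hG : G.PosSemidef)
    (hker : ∀ c : ι → ℝ, (∑ i, ∑ j, c i * G i j * c j) = 0 → ∃ a : ℝ, c = fun _ => a)
    {y : ι → ℝ} (hy : ∑ i, y i = 0) : ∃ z, G *ᵥ z = y := by
  have hT : G.toEuclideanLin.IsSymmetric := isSymmetric_toEuclideanLin_iff.mpr hG.1
  have hrange : WithLp.toLp 2 y ∈ LinearMap.range G.toEuclideanLin := by
    rw [← Submodule.orthogonal_orthogonal (LinearMap.range _), hT.orthogonal_range]
    intro c hc
    have hGc : G *ᵥ c.ofLp = 0 := by simpa using congrArg WithLp.ofLp hc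
    obtain ⟨a, ha⟩ := hker c.ofLp (by
      simpa [mulVec, dotProduct, Finset.mul_sum, mul_assoc] using
        congrArg (dotProduct c.ofLp) hGc)
    simp [EuclideanSpace.inner_eq_star_dotProduct, dotProduct, ha, ← Finset.sum_mul, hy]
  obtain ⟨z, hz⟩ := hrange
  exact ⟨z.ofLp, by simpa using congrArg WithLp.ofLp hz⟩

theorem exists_eq_sum_smul_of_sum_eq_zero {κ : Type*} [Fintype κ] [DecidableEq ι]
    {G : Matrix ι ι ℝ} (hG : G.PosSemidef)
    (hker : ∀ c : ι → ℝ, (∑ i, ∑ j, c i * G i j * c j) = 0 → ∃ a : ℝ, c = fun _ => a)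
    {y : ι → EuclideanSpace ℝ κ} (hy : ∑ i, y i = 0) :
    ∃ z : ι → EuclideanSpace ℝ κ, ∀ i, y i = ∑ j, G i j • z j := by
  have hcoord (k : κ) : ∃ zk : ι → ℝ, G *ᵥ zk = fun i => y i k :=
    exists_mulVec_eq_of_sum_eq_zero hG hker (by simpa using congrArg (· k) hy)
  choose zk hzk using hcoord
  refine ⟨fun j => WithLp.toLp 2 fun k => zk k j, fun i => ?_⟩
  ext k
  simpa [mulVec, dotProduct] using (congrFun (hzk k) i).symm

end

section

variable {n N : ℕ}

theorem blockNormG_eq_sqrt_blockForm (G : Matrix (Fin N) (Fin N) ℝ)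
    (w : Fin N → EuclideanSpace ℝ (Fin n)) :
    blockNormG n N G w = √(blockForm _ G w w) := by
  rw [blockForm_apply, blockNormG]

theorem blockNormG_nonneg (G : Matrix (Fin N) (Fin N) ℝ) (w : Fin N → EuclideanSpace ℝ (Fin n)) :
    0 ≤ blockNormG n N G w :=
  Real.sqrt_nonneg _

theorem blockNormG_smul (G : Matrix (Fin N) (Fin N) ℝ) (c : ℝ)
    (w : Fin N → EuclideanSpace ℝ (Fin n)) :
    blockNormG n N G (c • w) = |c| * blockNormG n N G w := by
  rw [blockNormG_eq_sqrt_blockForm, blockNormG_eq_sqrt_blockForm, map_smul, map_smul,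
    LinearMap.smul_apply, smul_eq_mul, smul_eq_mul, ← mul_assoc, Real.sqrt_mul (mul_self_nonneg c),
    Real.sqrt_mul_self_eq_abs]

theorem sum_inner_le_blockDualNormG_mul {G : Matrix (Fin N) (Fin N) ℝ} (hG : G.PosSemidef)
    (hker : ∀ c : Fin N → ℝ, (∑ i, ∑ j, c i * G i j * c j) = 0 → ∃ a : ℝ, c = fun _ => a)
    {y : Fin N → EuclideanSpace ℝ (Fin n)} (hy : ∑ i, y i = 0)
    (w : Fin N → EuclideanSpace ℝ (Fin n)) :
    ∑ i, ⟪y i, w i⟫ ≤ blockDualNormG n N G y * blockNormG n N G w := by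
  obtain ⟨z, hz⟩ := exists_eq_sum_smul_of_sum_eq_zero hG hker hy
  have hbound (w : Fin N → EuclideanSpace ℝ (Fin n)) :
      ∑ i, ⟪y i, w i⟫ ≤ blockNormG n N G w * blockNormG n N G z := by
    simpa only [sum_inner_eq_blockForm hz, blockNormG_eq_sqrt_blockForm]
      using blockForm_le_sqrt_mul_sqrt hG w z
  have hbdd : BddAbove {r : ℝ | ∃ w : Fin N → EuclideanSpace ℝ (Fin n),
      blockNormG n N G w ≤ 1 ∧ r = ∑ i, ⟪y i, w i⟫} := by
    refine ⟨blockNormG n N G z, ?_⟩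
    rintro r ⟨w, hw, rfl⟩
    exact (hbound w).trans (mul_le_of_le_one_left (blockNormG_nonneg G z) hw)
  rcases (blockNormG_nonneg G w).eq_or_lt with hw0 | hwpos
  · rw [← hw0, mul_zero]
    simpa [← hw0] using hbound w
  · have hunit : blockNormG n N G ((blockNormG n N G w)⁻¹ • w) ≤ 1 := by
      rw [blockNormG_smul, abs_inv, abs_of_pos hwpos, inv_mul_cancel₀ hwpos.ne']
    have := le_csSup hbdd ⟨_, hunit, rfl⟩
    simp only [Pi.smul_apply, real_inner_smul_right, ← Finset.mul_sum] at this
    rwa [inv_mul_le_iff₀ hwpos, mul_comm, ← blockDualNormG] at this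

theorem abs_sum_inner_le_blockDualNormG_mul {G : Matrix (Fin N) (Fin N) ℝ} (hG : G.PosSemidef)
    (hker : ∀ c : Fin N → ℝ, (∑ i, ∑ j, c i * G i j * c j) = 0 → ∃ a : ℝ, c = fun _ => a)
    {y : Fin N → EuclideanSpace ℝ (Fin n)} (hy : ∑ i, y i = 0)
    (w : Fin N → EuclideanSpace ℝ (Fin n)) :
    |∑ i, ⟪y i, w i⟫| ≤ blockDualNormG n N G y * blockNormG n N G w := by
  refine abs_le'.mpr ⟨sum_inner_le_blockDualNormG_mul hG hker hy w, ?_⟩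
  have h := sum_inner_le_blockDualNormG_mul hG hker hy ((-1 : ℝ) • w)
  rw [blockNormG_smul] at h
  simpa [real_inner_smul_right] using h

end

theorem sum_sub_sum_eq_of_fenchelYoung_eq {ι E : Type*} [Fintype ι] [NormedAddCommGroup E]
    [InnerProductSpace ℝ E] (g f : ι → E → ℝ) (u : ι → E → E)
    (hf : ∀ i y, f i y = ⟪y, u i y⟫ - g i (u i y)) {x xstar : ι → E} (hx : ∑ i, x i = 0)
    (hxstar : ∑ i, xstar i = 0) {v : E} (hv : ∀ i, u i (xstar i) = v) :
    ∑ i, g i (u i (x i)) - ∑ i, g i v =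
      ∑ i, ⟪x i, u i (x i) - v⟫ - (∑ i, f i (x i) - ∑ i, f i (xstar i)) := by
  have hg (i : ι) (y : E) : g i (u i y) = ⟪y, u i y⟫ - f i y := by linarith [hf i y]
  have hgv : ∑ i, g i v = -∑ i, f i (xstar i) := by
    have h := Finset.sum_congr rfl fun i (_ : i ∈ Finset.univ) => hg i (xstar i)
    simpa only [hv, Finset.sum_sub_distrib, ← sum_inner, hxstar, inner_zero_left, zero_sub] using h
  simp_rw [sum_inner_sub_const hx, hgv, hg, Finset.sum_sub_distrib]
  ring

theorem stmt_19_general (n N : ℕ)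
    (Q : Fin N → Set (EuclideanSpace ℝ (Fin n)))
    (g : Fin N → EuclideanSpace ℝ (Fin n) → ℝ)
    (vstar : EuclideanSpace ℝ (Fin n))
    (u : Fin N → EuclideanSpace ℝ (Fin n) → EuclideanSpace ℝ (Fin n))
    (fblk : Fin N → EuclideanSpace ℝ (Fin n) → ℝ)
    (hattain : ∀ i, ∀ y : EuclideanSpace ℝ (Fin n),
      u i y ∈ Q i ∧ fblk i y = ⟪y, u i y⟫ - g i (u i y) ∧
        ∀ w ∈ Q i, ⟪y, w⟫ - g i w ≤ fblk i y)
    (F : (Fin N → EuclideanSpace ℝ (Fin n)) → ℝ)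
    (hF : ∀ x : Fin N → EuclideanSpace ℝ (Fin n), F x = ∑ i, fblk i (x i))
    (G : Matrix (Fin N) (Fin N) ℝ)
    (hpsd : G.PosSemidef)
    (hker : ∀ c : Fin N → ℝ, (∑ i, ∑ j, c i * G i j * c j) = 0 →
      ∃ a : ℝ, c = fun _ => a)
    (hconv : ConvexOn ℝ Set.univ F) (hdiff : Differentiable ℝ F)
    (hgrad : ∀ x : Fin N → EuclideanSpace ℝ (Fin n),
      ∀ v : Fin N → EuclideanSpace ℝ (Fin n),
        fderiv ℝ F x v = ∑ i, ⟪u i (x i), v i⟫)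
    (xstar : Fin N → EuclideanSpace ℝ (Fin n)) (hxstarS : ∑ i, xstar i = 0)
    (hxstarmin : ∀ x : Fin N → EuclideanSpace ℝ (Fin n),
      (∑ i, x i = 0) → F xstar ≤ F x)
    (hxstaru : ∀ i, u i (xstar i) = vstar)
    (x : Fin N → EuclideanSpace ℝ (Fin n)) (hx : ∑ i, x i = 0) :
    (- blockDualNormG n N G xstar *
        blockNormG n N G (fun i => u i (x i) - vstar) ≤
      (∑ i, g i (u i (x i))) - ∑ i, g i vstar) ∧
    ((∑ i, g i (u i (x i))) - ∑ i, g i vstar ≤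
      (blockDualNormG n N G (x - xstar) + blockDualNormG n N G xstar) *
        blockNormG n N G (fun i => u i (x i) - vstar)) := by
  set d : Fin N → EuclideanSpace ℝ (Fin n) := fun i => u i (x i) - vstar
  have hxS : ∑ i, (x - xstar) i = 0 := by simp [Finset.sum_sub_distrib, hx, hxstarS]
  have hgap : ∑ i, g i (u i (x i)) - ∑ i, g i vstar = ∑ i, ⟪x i, d i⟫ - (F x - F xstar) := by
    simp only [hF]
    exact sum_sub_sum_eq_of_fenchelYoung_eq g fblk u (fun i y => (hattain i y).2.1) hx hxstarS
      hxstaru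
  have hdescent : F x - F xstar ≤ ∑ i, ⟪(x - xstar) i, d i⟫ := by
    have h := hconv.add_fderiv_sub_le trivial trivial (hdiff x).hasFDerivAt (b := xstar)
    simp only [hgrad, Pi.sub_apply, ← neg_sub (x _), inner_neg_right, Finset.sum_neg_distrib,
      real_inner_comm (x _ - xstar _)] at h
    rw [sum_inner_sub_const hxS vstar]
    simp only [Pi.sub_apply]
    linarith
  have hsplit : ∑ i, ⟪x i, d i⟫ = ∑ i, ⟪(x - xstar) i, d i⟫ + ∑ i, ⟪xstar i, d i⟫ := by
    simp [inner_sub_left, Finset.sum_sub_distrib]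
  have hmin := hxstarmin x hx
  have hCS := sum_inner_le_blockDualNormG_mul hpsd hker hxS d
  have hCS' := abs_le.mp (abs_sum_inner_le_blockDualNormG_mul hpsd hker hxstarS d)
  constructor <;> linarith

/-- Two-sided bound on the primal suboptimality
`∑_i g_i(u_i(x_i)) − ∑_i g_i(v*)` in terms of the norms `‖·‖_G`, `‖·‖*_G`. -/
theorem stmt_19 (n N : ℕ) (hn : 1 ≤ n) (hN : 2 ≤ N)
    (Q : Fin N → Set (EuclideanSpace ℝ (Fin n))) (hQ : ∀ i, Convex ℝ (Q i))
    (g : Fin N → EuclideanSpace ℝ (Fin n) → ℝ)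
    (vstar : EuclideanSpace ℝ (Fin n)) (hv : ∀ i, vstar ∈ Q i)
    (u : Fin N → EuclideanSpace ℝ (Fin n) → EuclideanSpace ℝ (Fin n))
    (fblk : Fin N → EuclideanSpace ℝ (Fin n) → ℝ)
    (hattain : ∀ i, ∀ y : EuclideanSpace ℝ (Fin n),
      u i y ∈ Q i ∧ fblk i y = ⟪y, u i y⟫ - g i (u i y) ∧
        ∀ w ∈ Q i, ⟪y, w⟫ - g i w ≤ fblk i y)
    (F : (Fin N → EuclideanSpace ℝ (Fin n)) → ℝ)
    (hF : ∀ x : Fin N → EuclideanSpace ℝ (Fin n), F x = ∑ i, fblk i (x i))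
    (G : Matrix (Fin N) (Fin N) ℝ)
    (hsym : G.IsSymm) (hpsd : G.PosSemidef)
    (hGe : G.mulVec (fun _ => (1 : ℝ)) = 0)
    (hker : ∀ c : Fin N → ℝ, (∑ i, ∑ j, c i * G i j * c j) = 0 →
      ∃ a : ℝ, c = fun _ => a)
    (hconv : ConvexOn ℝ Set.univ F) (hdiff : Differentiable ℝ F)
    (hgrad : ∀ x : Fin N → EuclideanSpace ℝ (Fin n),
      ∀ v : Fin N → EuclideanSpace ℝ (Fin n),
        fderiv ℝ F x v = ∑ i, ⟪u i (x i), v i⟫)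
    (xstar : Fin N → EuclideanSpace ℝ (Fin n)) (hxstarS : ∑ i, xstar i = 0)
    (hxstarmin : ∀ x : Fin N → EuclideanSpace ℝ (Fin n),
      (∑ i, x i = 0) → F xstar ≤ F x)
    (hxstaru : ∀ i, u i (xstar i) = vstar)
    (x : Fin N → EuclideanSpace ℝ (Fin n)) (hx : ∑ i, x i = 0) :
    (- blockDualNormG n N G xstar *
        blockNormG n N G (fun i => u i (x i) - vstar) ≤
      (∑ i, g i (u i (x i))) - ∑ i, g i vstar) ∧
    ((∑ i, g i (u i (x i))) - ∑ i, g i vstar ≤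
      (blockDualNormG n N G (x - xstar) + blockDualNormG n N G xstar) *
        blockNormG n N G (fun i => u i (x i) - vstar)) :=
  stmt_19_general n N Q g vstar u fblk hattain F hF G hpsd hker hconv hdiff hgrad xstar hxstarS
    hxstarmin hxstaru x hx
end
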